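/- arXiv:2206.14112 — 6 statements merged into one kernel-verified Lean document; each statement's English description precedes it below -/
import Mathlib

section
/- Let N be a finite player set, (ω,Σ) a weight system on N, and (N,v) a TU-game. If (N,v) is (ω,Σ)-convex, then its (ω,Σ)-weighted Shapley value Φ^ω(v) belongs to the core of (N,v). -/
/-!
The weighted Shapley value obeys the recursion
`Φ_i(T) = q^T_i (v T - v (T ∖ i)) + ∑_{j ∈ T ∖ i} q^T_j Φ_i(T ∖ j)` with `q^T_j = ω̄^T_j / ω̄^T`:
it is the expected marginal contribution when the last player of `T` is drawn with probability
`q^T` and the rest of the order is drawn recursively. The recursion is checked on unanimity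
coefficients, where it reduces to the consistency `q^T_i = (∑_{j ∈ S} q^T_j) q^S_i` for
`i ∈ S ⊆ T`. Summing it over a coalition `S` and inducting on `T`, the inductive step
`v S ≤ ∑_{i ∈ S} q^T_i (v T - v (T ∖ i)) + ∑_{j ∈ T} q^T_j v (S ∖ j)` is exactly
`(ω,Σ)`-convexity, and the case `S = T` is efficiency.
-/

open Finset

variable {α : Type*}

noncomputable section

/-- `ω̄^S_i`: the weight of `i` if `i` belongs to the top-priority part `S̄` of `S`, else `0`.
Here the ordered partition `Σ` is encoded by the priority function `p`. -/
def wbar [DecidableEq α] (ω : α → ℝ) (p : α → ℕ) (S : Finset α) (i : α) : ℝ :=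
  if i ∈ S ∧ p i = S.sup p then ω i else 0

/-- `ω̄^S = ∑_{i ∈ S̄} ω_i`. -/
def wbarSum [DecidableEq α] (ω : α → ℝ) (p : α → ℕ) (S : Finset α) : ℝ :=
  ∑ i ∈ S, wbar ω p S i

/-- `(ω,Σ)`-convexity of a TU-game `v`. -/
def WConvex [DecidableEq α] (ω : α → ℝ) (p : α → ℕ) (v : Finset α → ℝ) : Prop :=
  ∀ S T : Finset α, S ⊂ T →
    0 ≤ ∑ i ∈ S, wbar ω p T i * (v T - v (T.erase i) - v S + v (S.erase i))

/-- unanimity coefficients `λ_S(v)` (Harsanyi dividends). -/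
def unanimityCoeff [DecidableEq α] (v : Finset α → ℝ) (S : Finset α) : ℝ :=
  ∑ T ∈ S.powerset, (-1 : ℝ) ^ (S.card - T.card) * v T

/-- `(ω,Σ)`-weighted Shapley value of player `i` for the game `v` with ground coalition `M`
(note that `wbar ω p S i = 0` unless `i ∈ S̄`). -/
def wShapley [DecidableEq α] (ω : α → ℝ) (p : α → ℕ) (v : Finset α → ℝ)
    (M : Finset α) (i : α) : ℝ :=
  ∑ S ∈ M.powerset, wbar ω p S i / wbarSum ω p S * unanimityCoeff v S

/-- membership in the core of the TU-game `v`. -/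
def InCore [Fintype α] (v : Finset α → ℝ) (x : α → ℝ) : Prop :=
  (∑ i, x i) = v Finset.univ ∧ ∀ S : Finset α, v S ≤ ∑ i ∈ S, x i

theorem sum_Icc_neg_one_pow_card_sub [DecidableEq α] {U T : Finset α} (h : U ⊆ T) :
    ∑ S ∈ Icc U T, (-1 : ℝ) ^ (#S - #U) = if U = T then 1 else 0 := by
  have hdisj : ∀ R ∈ (T \ U).powerset, Disjoint U R := fun R hR =>
    disjoint_of_subset_right (mem_powerset.mp hR) disjoint_sdiff
  have hinj : Set.InjOn (U ∪ ·) ((T \ U).powerset : Set (Finset α)) := fun R hR R' hR' hRR' => by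
    simpa only [union_sdiff_cancel_left (hdisj R hR), union_sdiff_cancel_left (hdisj R' hR')]
      using congrArg (· \ U) hRR'
  rw [Icc_eq_image_powerset h, sum_image hinj, sum_congr rfl fun R hR => by
    rw [card_union_of_disjoint (hdisj R hR), Nat.add_sub_cancel_left]]
  have := sum_powerset_neg_one_pow_card (x := T \ U)
  have hempty : T \ U = ∅ ↔ U = T := by
    rw [sdiff_eq_empty_iff_subset]; exact ⟨h.antisymm, fun e => e ▸ subset_rfl⟩
  simp only [hempty] at this
  exact_mod_cast this

theorem sum_powerset_unanimityCoeff [DecidableEq α] (v : Finset α → ℝ) (T : Finset α) :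
    ∑ S ∈ T.powerset, unanimityCoeff v S = v T := by
  simp only [unanimityCoeff]
  rw [sum_comm' (t' := T.powerset) (s' := fun U => Icc U T) (by
    intro S U; simp only [mem_powerset, mem_Icc]; constructor
    · rintro ⟨hST, hUS⟩; exact ⟨⟨hUS, hST⟩, hUS.trans hST⟩
    · rintro ⟨⟨hUS, hST⟩, -⟩; exact ⟨hST, hUS⟩)]
  simp only [← sum_mul]
  rw [sum_congr rfl fun U hU => by rw [sum_Icc_neg_one_pow_card_sub (mem_powerset.mp hU)]]
  simp

theorem powerset_erase_eq_filter [DecidableEq α] (T : Finset α) (i : α) :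
    (T.erase i).powerset = {S ∈ T.powerset | i ∉ S} := by
  ext S; simp [subset_erase]

theorem sub_erase_eq_sum_unanimityCoeff [DecidableEq α] (v : Finset α → ℝ) (T : Finset α)
    (i : α) : v T - v (T.erase i) = ∑ S ∈ T.powerset with i ∈ S, unanimityCoeff v S := by
  rw [← sum_powerset_unanimityCoeff v T, ← sum_powerset_unanimityCoeff v (T.erase i),
    powerset_erase_eq_filter, ← sum_filter_add_sum_filter_not T.powerset (i ∈ ·)]
  ring

section WeightSystem

variable [DecidableEq α] {ω : α → ℝ} {p : α → ℕ} {S T : Finset α} {i j : α}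

def wShare (ω : α → ℝ) (p : α → ℕ) (S : Finset α) (i : α) : ℝ :=
  wbar ω p S i / wbarSum ω p S

theorem wShapley_eq_sum_wShare (v : Finset α → ℝ) (M : Finset α) (i : α) :
    wShapley ω p v M i = ∑ S ∈ M.powerset, wShare ω p S i * unanimityCoeff v S :=
  rfl

theorem wbar_eq_zero_of_notMem (h : i ∉ S) : wbar ω p S i = 0 :=
  if_neg fun h' => h h'.1

theorem wShare_eq_zero_of_notMem (h : i ∉ S) : wShare ω p S i = 0 := by
  rw [wShare, wbar_eq_zero_of_notMem h, zero_div]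

theorem wbar_nonneg (hω : ∀ i, 0 ≤ ω i) (S : Finset α) (i : α) : 0 ≤ wbar ω p S i := by
  unfold wbar; split_ifs <;> simp [hω]

theorem wShare_nonneg (hω : ∀ i, 0 ≤ ω i) (S : Finset α) (i : α) : 0 ≤ wShare ω p S i :=
  div_nonneg (wbar_nonneg hω S i) (sum_nonneg fun j _ => wbar_nonneg hω S j)

theorem wbarSum_pos (hω : ∀ i, 0 < ω i) (hS : S.Nonempty) : 0 < wbarSum ω p S := by
  obtain ⟨i, hi, hsup⟩ := exists_mem_eq_sup S hS p
  refine sum_pos' (fun j _ => wbar_nonneg (fun j => (hω j).le) S j) ⟨i, hi, ?_⟩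
  rw [wbar, if_pos ⟨hi, hsup.symm⟩]
  exact hω i

theorem sum_wShare (hω : ∀ i, 0 < ω i) (hS : S.Nonempty) : ∑ i ∈ S, wShare ω p S i = 1 := by
  simp only [wShare, ← sum_div]
  exact div_self (wbarSum_pos hω hS).ne'

theorem wbar_of_sup_eq (hST : S ⊆ T) (hsup : S.sup p = T.sup p) (hj : j ∈ S) :
    wbar ω p T j = wbar ω p S j := by
  simp only [wbar, hj, hST hj, true_and, hsup]

theorem wbar_of_sup_lt (hsup : S.sup p < T.sup p) (hj : j ∈ S) : wbar ω p T j = 0 :=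
  if_neg fun h => (h.2 ▸ le_sup (f := p) hj).not_gt hsup

theorem wShare_eq_sum_wShare_mul (hω : ∀ i, 0 < ω i) (hST : S ⊆ T) (hi : i ∈ S) :
    wShare ω p T i = (∑ j ∈ S, wShare ω p T j) * wShare ω p S i := by
  rcases (sup_mono hST : S.sup p ≤ T.sup p).lt_or_eq with hlt | heq
  · have h0 : ∀ j ∈ S, wShare ω p T j = 0 := fun j hj => by
      rw [wShare, wbar_of_sup_lt hlt hj, zero_div]
    rw [h0 i hi, sum_eq_zero h0, zero_mul]
  · have hS := (wbarSum_pos hω ⟨i, hi⟩ : 0 < wbarSum ω p S).ne'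
    simp only [wShare, ← sum_div]
    rw [sum_congr rfl fun j hj => wbar_of_sup_eq hST heq hj, wbar_of_sup_eq hST heq hi,
      ← wbarSum]
    field_simp

theorem ite_wShare_add_sum_sdiff_mul_wShare (hω : ∀ i, 0 < ω i) (hST : S ⊆ T) (i : α) :
    (if i ∈ S then wShare ω p T i else 0) + (∑ j ∈ (T \ S).erase i, wShare ω p T j) *
      wShare ω p S i = wShare ω p S i := by
  by_cases hi : i ∈ S
  · have hsplit := sum_sdiff hST (f := wShare ω p T)
    rw [sum_wShare hω ⟨i, hST hi⟩] at hsplit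
    rw [if_pos hi, erase_eq_of_notMem fun h => (mem_sdiff.mp h).2 hi,
      wShare_eq_sum_wShare_mul hω hST hi]
    linear_combination wShare ω p S i * hsplit
  · rw [if_neg hi, wShare_eq_zero_of_notMem hi]
    ring

theorem wShapley_eq_wShare_mul_add_sum (hω : ∀ i, 0 < ω i) (v : Finset α → ℝ) (T : Finset α)
    (i : α) : wShapley ω p v T i = wShare ω p T i * (v T - v (T.erase i)) +
      ∑ j ∈ T.erase i, wShare ω p T j * wShapley ω p v (T.erase j) i := by
  have hrest : ∀ j, wShapley ω p v (T.erase j) i =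
      ∑ S ∈ T.powerset with j ∉ S, wShare ω p S i * unanimityCoeff v S := fun j => by
    rw [wShapley_eq_sum_wShare, powerset_erase_eq_filter]
  calc wShapley ω p v T i
      = ∑ S ∈ T.powerset, ((if i ∈ S then wShare ω p T i else 0) +
          (∑ j ∈ (T \ S).erase i, wShare ω p T j) * wShare ω p S i) * unanimityCoeff v S := by
        rw [wShapley_eq_sum_wShare]
        exact sum_congr rfl fun S hS => by
          rw [ite_wShare_add_sum_sdiff_mul_wShare hω (mem_powerset.mp hS)]
    _ = ∑ S ∈ T.powerset, (if i ∈ S then wShare ω p T i else 0) * unanimityCoeff v S +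
          ∑ S ∈ T.powerset, ∑ j ∈ (T \ S).erase i,
            wShare ω p T j * (wShare ω p S i * unanimityCoeff v S) := by
        simp only [← sum_add_distrib, add_mul, sum_mul, mul_assoc]
    _ = _ := by
      congr 1
      · rw [sub_erase_eq_sum_unanimityCoeff, mul_sum, sum_filter]
        exact sum_congr rfl fun S _ => by split_ifs <;> simp
      · simp only [hrest, mul_sum]
        refine (sum_comm' fun S j => ?_).symm
        simp only [mem_powerset, mem_erase, mem_sdiff, mem_filter]
        tauto

theorem sum_wShapley_eq (hω : ∀ i, 0 < ω i) (v : Finset α → ℝ) (S T : Finset α) :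
    ∑ i ∈ S, wShapley ω p v T i = ∑ i ∈ S, wShare ω p T i * (v T - v (T.erase i)) +
      ∑ j ∈ T, wShare ω p T j * ∑ i ∈ S.erase j, wShapley ω p v (T.erase j) i := by
  simp only [wShapley_eq_wShare_mul_add_sum hω v T, sum_add_distrib, mul_sum]
  congr 1
  refine sum_comm' fun i j => ?_
  simp only [mem_erase]
  tauto

theorem sum_wShapley_self (hω : ∀ i, 0 < ω i) {v : Finset α → ℝ} (hv : v ∅ = 0)
    (T : Finset α) : ∑ i ∈ T, wShapley ω p v T i = v T := by
  induction T using strongInduction with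
  | H T ih =>
    rcases T.eq_empty_or_nonempty with rfl | hT
    · simp [hv]
    · calc ∑ i ∈ T, wShapley ω p v T i
          = ∑ i ∈ T, wShare ω p T i * (v T - v (T.erase i)) +
              ∑ j ∈ T, wShare ω p T j * v (T.erase j) := by
            rw [sum_wShapley_eq hω]
            exact congrArg _ (sum_congr rfl fun j hj => by rw [ih _ (erase_ssubset hj)])
        _ = (∑ i ∈ T, wShare ω p T i) * v T := by
            rw [← sum_add_distrib, sum_mul]
            exact sum_congr rfl fun i _ => by ring
        _ = v T := by rw [sum_wShare hω hT, one_mul]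

theorem WConvex.le_sum_wShare (hω : ∀ i, 0 < ω i) {v : Finset α → ℝ} (hconv : WConvex ω p v)
    (hST : S ⊂ T) : v S ≤ ∑ i ∈ S, wShare ω p T i * (v T - v (T.erase i)) +
      ∑ j ∈ T, wShare ω p T j * v (S.erase j) := by
  obtain ⟨x, hxT, -⟩ := exists_of_ssubset hST
  have hT : T.Nonempty := ⟨x, hxT⟩
  have hout : ∑ j ∈ T, wShare ω p T j * (v (S.erase j) - v S) =
      ∑ j ∈ S, wShare ω p T j * (v (S.erase j) - v S) :=
    (sum_subset hST.subset fun j _ hj => by rw [erase_eq_of_notMem hj, sub_self, mul_zero]).symm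
  have hgap : ∑ i ∈ S, wShare ω p T i * (v T - v (T.erase i)) +
      ∑ j ∈ T, wShare ω p T j * v (S.erase j) - v S =
      (∑ i ∈ S, wbar ω p T i * (v T - v (T.erase i) - v S + v (S.erase i))) / wbarSum ω p T :=
    calc _ = ∑ i ∈ S, wShare ω p T i * (v T - v (T.erase i)) +
          ∑ j ∈ T, wShare ω p T j * (v (S.erase j) - v S) := by
          simp only [mul_sub, sum_sub_distrib, ← sum_mul, sum_wShare hω hT]
          ring
      _ = ∑ i ∈ S, wShare ω p T i * (v T - v (T.erase i) - v S + v (S.erase i)) := by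
          rw [hout, ← sum_add_distrib]
          exact sum_congr rfl fun _ _ => by ring
      _ = _ := by
          simp only [wShare, sum_div]
          exact sum_congr rfl fun _ _ => by ring
  rw [← sub_nonneg, hgap]
  exact div_nonneg (hconv S T hST) (wbarSum_pos hω hT).le

theorem le_sum_wShapley (hω : ∀ i, 0 < ω i) {v : Finset α → ℝ} (hv : v ∅ = 0)
    (hconv : WConvex ω p v) (hST : S ⊆ T) : v S ≤ ∑ i ∈ S, wShapley ω p v T i := by
  induction T using strongInduction generalizing S with
  | H T ih =>
    rcases hST.ssubset_or_eq with hST | rfl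
    · calc v S
          ≤ ∑ i ∈ S, wShare ω p T i * (v T - v (T.erase i)) +
              ∑ j ∈ T, wShare ω p T j * v (S.erase j) := hconv.le_sum_wShare hω hST
        _ ≤ ∑ i ∈ S, wShare ω p T i * (v T - v (T.erase i)) +
              ∑ j ∈ T, wShare ω p T j * ∑ i ∈ S.erase j, wShapley ω p v (T.erase j) i := by
            gcongr with j hj
            · exact wShare_nonneg (fun i => (hω i).le) T j
            · exact ih _ (erase_ssubset hj) (erase_subset_erase j hST.subset)
        _ = ∑ i ∈ S, wShapley ω p v T i := (sum_wShapley_eq hω v S T).symm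
    · exact (sum_wShapley_self hω hv S).ge

end WeightSystem

theorem weighted_shapley_mem_core_general [Fintype α] [DecidableEq α]
    (ω : α → ℝ) (hω : ∀ i, 0 < ω i) (p : α → ℕ)
    (v : Finset α → ℝ) (hv : v ∅ = 0) (hconv : WConvex ω p v) :
    InCore v (fun i => wShapley ω p v Finset.univ i) :=
  ⟨sum_wShapley_self hω hv univ, fun S => le_sum_wShapley hω hv hconv (subset_univ S)⟩

/-- If a TU-game is `(ω,Σ)`-convex, then its `(ω,Σ)`-weighted Shapley value is in the core. -/
theorem weighted_shapley_mem_core [Fintype α] [DecidableEq α]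
    (ω : α → ℝ) (hω : ∀ i, 0 < ω i) (p : α → ℕ) (hp : ∀ i, 1 ≤ p i)
    (v : Finset α → ℝ) (hv : v ∅ = 0) (hconv : WConvex ω p v) :
    InCore v (fun i => wShapley ω p v Finset.univ i) :=
  weighted_shapley_mem_core_general ω hω p v hv hconv

end
end

section
/- Let (N,v) be an (ω,Σ)-convex TU-game. Let S,T,U ⊆ N be such that S ∩ T = ∅, U ⊆ T, and for every s∈S one has p(s) > p(U) and p(s) ≥ p(T). Then v(S ∪ T) − v(T) ≥ v(S ∪ U) − v(U). (Here p(∅) is taken to be 0, below every priority level.) -/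
open Finset

variable {α : Type*}

noncomputable section

/-- If `(N,v)` is `(ω,Σ)`-convex, `S ∩ T = ∅`, `U ⊆ T`, and every `s ∈ S` satisfies
`p(s) > p(U)` and `p(s) ≥ p(T)`, then `v(S ∪ T) − v(T) ≥ v(S ∪ U) − v(U)`. -/
theorem wconvex_marginal_monotone [DecidableEq α]
    (ω : α → ℝ) (hω : ∀ i, 0 < ω i) (p : α → ℕ) (hp : ∀ i, 1 ≤ p i)
    (v : Finset α → ℝ) (hv : v ∅ = 0) (hconv : WConvex ω p v)
    (S T U : Finset α) (hST : Disjoint S T) (hUT : U ⊆ T)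
    (hU : ∀ s ∈ S, U.sup p < p s) (hT : ∀ s ∈ S, T.sup p ≤ p s) :
    v (S ∪ U) - v U ≤ v (S ∪ T) - v T := by
  classical
  revert hST hU hT
  induction S using Finset.strongInduction with
  | _ S ih =>
    intro hST hU hT
    rcases S.eq_empty_or_nonempty with rfl | hS
    · simp
    rcases eq_or_ne U T with rfl | hUTne
    · exact le_rfl
    have hUssub : U ⊂ T := ⟨hUT, fun h => hUTne (subset_antisymm hUT h)⟩
    have hssub : S ∪ U ⊂ S ∪ T := by
      refine ⟨Finset.union_subset_union_right hUT, fun h => hUTne ?_⟩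
      refine subset_antisymm hUT fun t ht => ?_
      have : t ∈ S ∪ U := h (Finset.mem_union_right S ht)
      rcases Finset.mem_union.mp this with h' | h'
      · exact absurd ht (Finset.disjoint_left.mp hST h')
      · exact h'
    obtain ⟨s₀, hs₀S, hs₀sup⟩ := Finset.exists_mem_eq_sup S hS p
    have hTS : T.sup p ≤ S.sup p := le_trans (hT s₀ hs₀S) (Finset.le_sup hs₀S)
    have hBsup : (S ∪ T).sup p = S.sup p := by
      rw [Finset.sup_union]; exact sup_eq_left.mpr hTS
    have hsum := hconv (S ∪ U) (S ∪ T) hssub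
    have key : ∃ i ∈ S, p i = S.sup p ∧
        0 ≤ v (S ∪ T) - v ((S ∪ T).erase i) - v (S ∪ U) + v ((S ∪ U).erase i) := by
      by_contra hcon
      push_neg at hcon
      have hlt : ∑ i ∈ S ∪ U, wbar ω p (S ∪ T) i *
          (v (S ∪ T) - v ((S ∪ T).erase i) - v (S ∪ U) + v ((S ∪ U).erase i))
          < ∑ _i ∈ S ∪ U, (0 : ℝ) := by
        apply Finset.sum_lt_sum
        · intro i hi
          unfold wbar
          split_ifs with hcond
          · obtain ⟨hiB, hip⟩ := hcond
            rw [hBsup] at hip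
            have hiS : i ∈ S := by
              rcases Finset.mem_union.mp hi with h' | h'
              · exact h'
              · exact absurd (hip.trans hs₀sup)
                  (ne_of_lt (lt_of_le_of_lt (Finset.le_sup (f := p) h') (hU s₀ hs₀S)))
            have := hcon i hiS hip
            nlinarith [hω i]
          · simp
        · refine ⟨s₀, Finset.mem_union_left U hs₀S, ?_⟩
          have hcond : s₀ ∈ S ∪ T ∧ p s₀ = (S ∪ T).sup p := by
            exact ⟨Finset.mem_union_left T hs₀S, by rw [hBsup]; exact hs₀sup.symm⟩
          rw [wbar, if_pos hcond]
          have := hcon s₀ hs₀S hs₀sup.symm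
          nlinarith [hω s₀]
      simp only [Finset.sum_const_zero] at hlt
      linarith
    obtain ⟨i, hiS, hipsup, hterm⟩ := key
    have hiT : i ∉ T := Finset.disjoint_left.mp hST hiS
    have hiU : i ∉ U := fun h => hiT (hUT h)
    have heT : (S ∪ T).erase i = S.erase i ∪ T := by
      rw [Finset.erase_union_distrib, Finset.erase_eq_of_notMem hiT]
    have heU : (S ∪ U).erase i = S.erase i ∪ U := by
      rw [Finset.erase_union_distrib, Finset.erase_eq_of_notMem hiU]
    rw [heT, heU] at hterm
    have hih := ih (S.erase i) (Finset.erase_ssubset hiS)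
      (Finset.disjoint_of_subset_left (Finset.erase_subset i S) hST)
      (fun s hs => hU s (Finset.mem_of_mem_erase hs))
      (fun s hs => hT s (Finset.mem_of_mem_erase hs))
    linarith


end
end

section
/- Let (N,v) be a TU-game and (ω,Σ) a weight system on N with Σ = (N), the trivial ordered partition with the single block N. If (N,v) is (ω,Σ)-convex, then v is superadditive, i.e., for all disjoint A,B ⊆ N, v(A ∪ B) ≥ v(A) + v(B). -/
open Finset

variable {α : Type*}

noncomputable section

lemma aux_key [DecidableEq α]
    (ω : α → ℝ) (hω : ∀ i, 0 < ω i)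
    (v : Finset α → ℝ) (hv : v ∅ = 0)
    (hconv : WConvex ω (fun _ => 1) v)
    (B : Finset α) (hB : B.Nonempty) :
    ∀ S : Finset α, Disjoint S B → 0 ≤ v (S ∪ B) - v B - v S := by
  intro S
  induction S using Finset.strongInduction with
  | _ S ih =>
    intro hSB
    rcases S.eq_empty_or_nonempty with rfl | hS
    · simp [hv]
    · have hsub : S ⊂ S ∪ B := by
        obtain ⟨b, hb⟩ := hB
        refine Finset.ssubset_iff_of_subset Finset.subset_union_left |>.2
          ⟨b, Finset.mem_union_right _ hb, fun hbS => ?_⟩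
        exact (Finset.disjoint_left.1 hSB hbS) hb
      have hc := hconv S (S ∪ B) hsub
      have hne : (S ∪ B).Nonempty := hS.mono Finset.subset_union_left
      have hw : ∀ i ∈ S, wbar ω (fun _ => 1) (S ∪ B) i = ω i := by
        intro i hi
        unfold wbar
        rw [if_pos ⟨Finset.mem_union_left _ hi, (Finset.sup_const hne 1).symm⟩]
      have herase : ∀ i ∈ S, (S ∪ B).erase i = S.erase i ∪ B := by
        intro i hi
        rw [Finset.erase_union_distrib,
          Finset.erase_eq_of_notMem (Finset.disjoint_left.1 hSB hi)]
      have hc2 : 0 ≤ ∑ i ∈ S, ω i *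
          ((v (S ∪ B) - v B - v S) - (v (S.erase i ∪ B) - v B - v (S.erase i))) := by
        refine le_of_le_of_eq hc (Finset.sum_congr rfl fun i hi => ?_)
        rw [hw i hi, herase i hi]; ring_nf
      have hsum : ∑ i ∈ S, ω i * (v (S.erase i ∪ B) - v B - v (S.erase i))
          ≤ ∑ i ∈ S, ω i * (v (S ∪ B) - v B - v S) := by
        have := hc2
        rw [Finset.sum_congr rfl (fun i _ => mul_sub (ω i) _ _), Finset.sum_sub_distrib] at this
        linarith
      have hlhs : 0 ≤ ∑ i ∈ S, ω i * (v (S.erase i ∪ B) - v B - v (S.erase i)) := by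
        refine Finset.sum_nonneg fun i hi => mul_nonneg (hω i).le ?_
        exact ih (S.erase i) (Finset.erase_ssubset hi)
          (hSB.mono_left (Finset.erase_subset _ _))
      have hrhs : 0 ≤ (∑ i ∈ S, ω i) * (v (S ∪ B) - v B - v S) := by
        rw [Finset.sum_mul]
        refine le_trans hlhs (le_trans hsum (le_of_eq ?_))
        rfl
      have hpos : 0 < ∑ i ∈ S, ω i :=
        Finset.sum_pos (fun i _ => hω i) hS
      exact nonneg_of_mul_nonneg_right hrhs hpos

/-- For the trivial ordered partition `Σ = (N)` (all players have the same priority `1`),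
`(ω,Σ)`-convexity implies superadditivity. -/
theorem wconvex_trivial_partition_superadditive [DecidableEq α]
    (ω : α → ℝ) (hω : ∀ i, 0 < ω i)
    (v : Finset α → ℝ) (hv : v ∅ = 0)
    (hconv : WConvex ω (fun _ => 1) v)
    (A B : Finset α) (hAB : Disjoint A B) :
    v A + v B ≤ v (A ∪ B) := by
  rcases B.eq_empty_or_nonempty with rfl | hB
  · simp [hv]
  · have := aux_key ω hω v hv hconv B hB A hAB
    linarith

end
end

section
/- Let G=(N,E) be a connected simple graph on a finite player set N and let (ω,Σ) be a weight system on N with Σ = (N) the trivial ordered partition. Then the following are equivalent: (1) G preserves (ω,Σ)-convexity; (2) G is cycle-complete and G has no restricted subgraph that is a 4-path or a 3-pan; (3) G is a complete graph or a star. -/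
open Finset

variable {α : Type*}

noncomputable section

open scoped Classical

/-- The connected component of `i` in the subgraph of `G` induced by `S`. -/
def compOf [Fintype α] (G : SimpleGraph α) (S : Finset α) (i : α) : Finset α :=
  S.filter fun j => Relation.ReflTransGen (fun a b => a ∈ S ∧ b ∈ S ∧ G.Adj a b) i j

/-- The communication game `v^G`: `v^G(S)` is the sum of `v` over the (vertex sets of the)
connected components of the subgraph of `G` induced by `S`. -/
def commGame [Fintype α] [DecidableEq α] (G : SimpleGraph α)
    (v : Finset α → ℝ) (S : Finset α) : ℝ :=
  ∑ A ∈ S.image (compOf G S), v A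

/-- `G` preserves `(ω,Σ)`-convexity. -/
def Preserves [Fintype α] [DecidableEq α] (G : SimpleGraph α)
    (ω : α → ℝ) (p : α → ℕ) : Prop :=
  ∀ v : Finset α → ℝ, v ∅ = 0 → WConvex ω p v → WConvex ω p (commGame G v)

/-- `G` is cycle-complete: the vertices of any cycle induce a complete subgraph. -/
def CycleComplete (G : SimpleGraph α) : Prop :=
  ∀ (u : α) (c : G.Walk u u), c.IsCycle →
    ∀ x ∈ c.support, ∀ y ∈ c.support, x ≠ y → G.Adj x y

/-- `G` has a restricted subgraph which is a `4`-path. -/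
def Has4Path (G : SimpleGraph α) : Prop :=
  ∃ i j k l : α, i ≠ j ∧ i ≠ k ∧ i ≠ l ∧ j ≠ k ∧ j ≠ l ∧ k ≠ l ∧
    G.Adj i j ∧ G.Adj j k ∧ G.Adj k l ∧ ¬G.Adj i k ∧ ¬G.Adj i l ∧ ¬G.Adj j l

/-- `G` has a restricted subgraph which is a `3`-pan. -/
def Has3Pan (G : SimpleGraph α) : Prop :=
  ∃ i j k l : α, i ≠ j ∧ i ≠ k ∧ i ≠ l ∧ j ≠ k ∧ j ≠ l ∧ k ≠ l ∧
    G.Adj i j ∧ G.Adj j k ∧ G.Adj k i ∧ G.Adj i l ∧ ¬G.Adj j l ∧ ¬G.Adj k l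

/-- `G` is complete. -/
def IsCompleteGraph (G : SimpleGraph α) : Prop := ∀ x y : α, x ≠ y → G.Adj x y

/-- `G` is a star: some vertex (the center) is adjacent to all other vertices and there are
no other edges. -/
def IsStarGraph (G : SimpleGraph α) : Prop :=
  ∃ c : α, ∀ x y : α, G.Adj x y ↔ x ≠ y ∧ (x = c ∨ y = c)

/-! On a complete graph `v^G = v`. On a star, `v^G` agrees with `v` on coalitions containing the
centre and is additive on the others; superadditivity of `v` and the monotonicity of
`A ↦ v A - ∑ x ∈ A, v {x}`, both consequences of `(ω,Σ)`-convexity, then show that `v^G` is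
`(ω,Σ)`-convex.

Conversely, a connected graph in which every path `a - b - c - d` on four vertices has the chord
`a c` has diameter at most two and is complete or a star. A path without that chord spans an
induced `4`-path, an induced `3`-pan or a `4`-cycle missing a diagonal; cycle-completeness
excludes the last. On each of these four vertices an explicit `(ω,Σ)`-convex game (a unanimity
game or a fork game) has a communication game whose convexity inequality fails for a
three-player coalition inside the four. -/

section Games

variable [DecidableEq α] {ω : α → ℝ} {n : ℕ} {v : Finset α → ℝ}

theorem wbar_const_of_mem (ω : α → ℝ) (n : ℕ) {S : Finset α} {i : α} (hi : i ∈ S) :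
    wbar ω (fun _ => n) S i = ω i :=
  if_pos ⟨hi, (Finset.sup_const ⟨i, hi⟩ n).symm⟩

def convexityGap (ω : α → ℝ) (S T : Finset α) : (Finset α → ℝ) →ₗ[ℝ] ℝ where
  toFun v := ∑ i ∈ S, ω i * (v T - v (T.erase i) - v S + v (S.erase i))
  map_add' v w := by
    simp only [Pi.add_apply, ← Finset.sum_add_distrib]
    exact Finset.sum_congr rfl fun _ _ => by ring
  map_smul' c v := by
    simp only [Pi.smul_apply, smul_eq_mul, RingHom.id_apply, Finset.mul_sum]
    exact Finset.sum_congr rfl fun _ _ => by ring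

theorem convexityGap_apply (S T : Finset α) (v : Finset α → ℝ) :
    convexityGap ω S T v = ∑ i ∈ S, ω i * (v T - v (T.erase i) - v S + v (S.erase i)) :=
  rfl

theorem wconvex_const_iff :
    WConvex ω (fun _ => n) v ↔ ∀ S T, S ⊂ T → 0 ≤ convexityGap ω S T v := by
  refine forall₂_congr fun S T => imp_congr_right fun hST => ?_
  rw [convexityGap_apply]
  refine iff_of_eq (congrArg _ (Finset.sum_congr rfl fun i hi => ?_))
  rw [wbar_const_of_mem ω n (hST.subset hi)]

theorem WConvex.nonneg_of_four (hv : WConvex ω (fun _ => n) v) {x y z t : α} (hxy : x ≠ y)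
    (hxz : x ≠ z) (hxt : x ≠ t) (hyz : y ≠ z) (hyt : y ≠ t) (hzt : z ≠ t) :
    0 ≤ ω x * (v {x, y, z, t} - v {y, z, t} - v {x, y, z} + v {y, z}) +
      ω y * (v {x, y, z, t} - v {x, z, t} - v {x, y, z} + v {x, z}) +
      ω z * (v {x, y, z, t} - v {x, y, t} - v {x, y, z} + v {x, y}) := by
  have hST : ({x, y, z} : Finset α) ⊂ {x, y, z, t} :=
    Finset.ssubset_iff_of_subset (by intro; simp; tauto) |>.2
      ⟨t, by simp, by simp [hxt.symm, hyt.symm, hzt.symm]⟩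
  have := wconvex_const_iff.1 hv _ _ hST
  rw [convexityGap_apply, Finset.sum_insert (by simp [hxy, hxz]),
    Finset.sum_insert (by simp [hyz]), Finset.sum_singleton, ← add_assoc] at this
  simpa [Finset.erase_insert_of_ne, Finset.erase_insert_eq_erase, hxy, hxz, hxt, hyz, hyt, hzt]
    using this

theorem WConvex.add_singleton_le (hω : ∀ i, 0 < ω i) (hv0 : v ∅ = 0)
    (hv : WConvex ω (fun _ => n) v) {A : Finset α} {j : α} (hj : j ∉ A) :
    v A + v {j} ≤ v (insert j A) := by
  obtain rfl | ⟨a, ha⟩ := A.eq_empty_or_nonempty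
  · simp [hv0]
  have hsub : {j} ⊂ insert j A :=
    Finset.ssubset_iff_of_subset (by simp) |>.2
      ⟨a, by simp [ha], by simpa using ne_of_mem_of_not_mem ha hj⟩
  have := wconvex_const_iff.1 hv _ _ hsub
  rw [convexityGap_apply, Finset.sum_singleton, Finset.erase_insert hj, Finset.erase_singleton,
    hv0] at this
  nlinarith [hω j]

theorem WConvex.sub_sum_singleton_le_union (hω : ∀ i, 0 < ω i) (hv0 : v ∅ = 0)
    (hv : WConvex ω (fun _ => n) v) (A C : Finset α) :
    v A - ∑ x ∈ A, v {x} ≤ v (A ∪ C) - ∑ x ∈ A ∪ C, v {x} := by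
  induction C using Finset.induction_on with
  | empty => simp
  | @insert x C _ ih =>
    rw [Finset.union_insert]
    by_cases hx : x ∈ A ∪ C
    · rwa [Finset.insert_eq_of_mem hx]
    · rw [Finset.sum_insert hx]
      linarith [hv.add_singleton_le hω hv0 hx]

theorem WConvex.sub_sum_singleton_mono (hω : ∀ i, 0 < ω i) (hv0 : v ∅ = 0)
    (hv : WConvex ω (fun _ => n) v) {A B : Finset α} (hAB : A ⊆ B) :
    v A - ∑ x ∈ A, v {x} ≤ v B - ∑ x ∈ B, v {x} := by
  simpa [Finset.union_eq_right.2 hAB] using hv.sub_sum_singleton_le_union hω hv0 A B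

end Games

section Unanimity

variable [DecidableEq α] {ω : α → ℝ} {n : ℕ}

def unanimityGame (R A : Finset α) : ℝ := if R ⊆ A then 1 else 0

theorem convexityGap_unanimityGame (R S T : Finset α) :
    convexityGap ω S T (unanimityGame R) =
      (unanimityGame R T - unanimityGame R S) * ∑ i ∈ R, if i ∈ S then ω i else 0 := by
  rw [convexityGap_apply, Finset.sum_ite_mem, Finset.inter_comm, ← Finset.sum_ite_mem,
    Finset.mul_sum]
  refine Finset.sum_congr rfl fun i _ => ?_
  have hT : unanimityGame R (T.erase i) = if i ∈ R then 0 else unanimityGame R T := by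
    by_cases hiR : i ∈ R <;> simp [unanimityGame, Finset.subset_erase, hiR]
  have hS : unanimityGame R (S.erase i) = if i ∈ R then 0 else unanimityGame R S := by
    by_cases hiR : i ∈ R <;> simp [unanimityGame, Finset.subset_erase, hiR]
  by_cases hiR : i ∈ R <;> simp [hT, hS, hiR]
  ring

theorem unanimityGame_mono (R : Finset α) {S T : Finset α} (hST : S ⊆ T) :
    unanimityGame R S ≤ unanimityGame R T := by
  by_cases hRS : R ⊆ S
  · simp [unanimityGame, hRS, hRS.trans hST]
  · by_cases hRT : R ⊆ T <;> simp [unanimityGame, hRS, hRT]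

theorem sum_ite_mem_nonneg (hω : ∀ i, 0 ≤ ω i) (R S : Finset α) :
    0 ≤ ∑ i ∈ R, if i ∈ S then ω i else 0 :=
  Finset.sum_nonneg fun i _ => by split_ifs <;> simp [hω i]

theorem wconvex_unanimityGame (hω : ∀ i, 0 ≤ ω i) (R : Finset α) :
    WConvex ω (fun _ => n) (unanimityGame R) :=
  wconvex_const_iff.2 fun S T hST => by
    rw [convexityGap_unanimityGame]
    exact mul_nonneg (sub_nonneg.2 (unanimityGame_mono R hST.subset)) (sum_ite_mem_nonneg hω R S)

/-- `(ω,Σ)`-convex but not supermodular, as a counterexample on a cycle-complete graph has to be: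
communication games on such graphs preserve ordinary convexity. -/
def forkGame (ω : α → ℝ) (x y z : α) : Finset α → ℝ :=
  (ω x + ω z) • unanimityGame {x, y} + (ω x + ω y) • unanimityGame {x, z} -
    ω x • unanimityGame {x, y, z}

theorem forkGame_empty (ω : α → ℝ) (x y z : α) : forkGame ω x y z ∅ = 0 := by
  simp [forkGame, unanimityGame]

theorem wconvex_forkGame (hω : ∀ i, 0 < ω i) {x y z : α} (hxy : x ≠ y) (hxz : x ≠ z)
    (hyz : y ≠ z) : WConvex ω (fun _ => n) (forkGame ω x y z) := by
  refine wconvex_const_iff.2 fun S T hST => ?_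
  have hsub := hST.subset
  simp only [forkGame, map_add, map_sub, map_smul, smul_eq_mul, convexityGap_unanimityGame]
  have hxy_ge := sub_nonneg.2 (unanimityGame_mono {x, y} hsub)
  have hxz_ge := sub_nonneg.2 (unanimityGame_mono {x, z} hsub)
  by_cases h : {x, y, z} ⊆ T ∧ ¬ {x, y, z} ⊆ S
  · obtain ⟨hT, hS⟩ := h
    simp only [Finset.insert_subset_iff, Finset.singleton_subset_iff] at hT hS
    by_cases hx : x ∈ S <;> by_cases hy : y ∈ S <;> by_cases hz : z ∈ S <;>
      simp [unanimityGame, Finset.insert_subset_iff, hxy, hxz, hyz, hx, hy, hz, hT] at hS ⊢ <;>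
      nlinarith [hω x, hω y, hω z]
  · have : unanimityGame {x, y, z} T - unanimityGame {x, y, z} S = 0 := by
      by_cases hRS : {x, y, z} ⊆ S
      · simp [unanimityGame, hRS, hRS.trans hsub]
      · simp [unanimityGame, hRS, show ¬ {x, y, z} ⊆ T from fun hRT => h ⟨hRT, hRS⟩]
    rw [this, zero_mul, mul_zero, sub_zero]
    have hω' i := (hω i).le
    exact add_nonneg
      (mul_nonneg (add_pos (hω x) (hω z)).le (mul_nonneg hxy_ge (sum_ite_mem_nonneg hω' _ S)))
      (mul_nonneg (add_pos (hω x) (hω y)).le (mul_nonneg hxz_ge (sum_ite_mem_nonneg hω' _ S)))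

end Unanimity

section CommunicationGame

open Relation

variable {G : SimpleGraph α}

def inducedAdj (G : SimpleGraph α) (S : Finset α) (a b : α) : Prop :=
  a ∈ S ∧ b ∈ S ∧ G.Adj a b

theorem inducedAdj.symm {S : Finset α} {a b : α} (h : inducedAdj G S a b) :
    inducedAdj G S b a :=
  ⟨h.2.1, h.1, h.2.2.symm⟩

theorem reflTransGen_inducedAdj_symm {S : Finset α} {i j : α}
    (h : ReflTransGen (inducedAdj G S) i j) : ReflTransGen (inducedAdj G S) j i :=
  reflTransGen_swap.1 (ReflTransGen.mono (fun _ _ => inducedAdj.symm) _ _ h)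

theorem reflTransGen_inducedAdj_mono {S T : Finset α} (hST : S ⊆ T) {i j : α}
    (h : ReflTransGen (inducedAdj G S) i j) : ReflTransGen (inducedAdj G T) i j :=
  ReflTransGen.mono (fun _ _ hab => ⟨hST hab.1, hST hab.2.1, hab.2.2⟩) _ _ h

def IsConnectedIn (G : SimpleGraph α) (S : Finset α) : Prop :=
  S.Nonempty ∧ ∀ i ∈ S, ∀ j ∈ S, ReflTransGen (inducedAdj G S) i j

theorem isConnectedIn_of_forall_adj {S : Finset α} {c : α} (hc : c ∈ S)
    (h : ∀ x ∈ S, x ≠ c → G.Adj c x) : IsConnectedIn G S := by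
  have hreach : ∀ x ∈ S, ReflTransGen (inducedAdj G S) c x := fun x hx => by
    by_cases hxc : x = c
    · rw [hxc]
    · exact .single ⟨hc, hx, h x hx hxc⟩
  exact ⟨⟨c, hc⟩, fun i hi j hj =>
    (reflTransGen_inducedAdj_symm (hreach i hi)).trans (hreach j hj)⟩

theorem isConnectedIn_pair [DecidableEq α] {a b : α} (h : G.Adj a b) :
    IsConnectedIn G {a, b} :=
  isConnectedIn_of_forall_adj (Finset.mem_insert_self a _) (by simp [h])

theorem IsConnectedIn.insert_of_adj [DecidableEq α] {S : Finset α} {a x : α}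
    (h : IsConnectedIn G S) (ha : a ∈ S) (hxa : G.Adj x a) : IsConnectedIn G (insert x S) := by
  have hsub : S ⊆ insert x S := Finset.subset_insert x S
  have hreach : ∀ j ∈ insert x S, ReflTransGen (inducedAdj G (insert x S)) a j := fun j hj => by
    rcases Finset.mem_insert.1 hj with rfl | hj
    · exact .single ⟨hsub ha, Finset.mem_insert_self j S, hxa.symm⟩
    · exact reflTransGen_inducedAdj_mono hsub (h.2 a ha j hj)
  exact ⟨Finset.insert_nonempty x S, fun i hi j hj =>
    (reflTransGen_inducedAdj_symm (hreach i hi)).trans (hreach j hj)⟩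

section Components

variable [Fintype α]

theorem mem_compOf {S : Finset α} {i j : α} :
    j ∈ compOf G S i ↔ j ∈ S ∧ ReflTransGen (inducedAdj G S) i j :=
  Finset.mem_filter

theorem compOf_subset (S : Finset α) (i : α) : compOf G S i ⊆ S :=
  Finset.filter_subset _ _

theorem mem_compOf_self {S : Finset α} {i : α} (hi : i ∈ S) : i ∈ compOf G S i :=
  mem_compOf.2 ⟨hi, ReflTransGen.refl⟩

end Components

section Game

variable [Fintype α] [DecidableEq α] {v : Finset α → ℝ}

theorem IsConnectedIn.commGame_eq {S : Finset α} (h : IsConnectedIn G S) :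
    commGame G v S = v S := by
  have hcomp : ∀ i ∈ S, compOf G S i = S := fun i hi =>
    Finset.filter_true_of_mem fun j hj => h.2 i hi j hj
  rw [commGame, Finset.image_congr hcomp, Finset.image_const h.1, Finset.sum_singleton]

theorem commGame_singleton (x : α) : commGame G v {x} = v {x} :=
  (isConnectedIn_of_forall_adj (Finset.mem_singleton_self x) (by simp)).commGame_eq

theorem compOf_union_left {A B : Finset α} (hAB : ∀ a ∈ A, ∀ b ∈ B, ¬ G.Adj a b) {i : α}
    (hi : i ∈ A) : compOf G (A ∪ B) i = compOf G A i := by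
  ext j
  rw [mem_compOf, mem_compOf]
  refine ⟨?_, fun ⟨hj, h⟩ =>
    ⟨Finset.mem_union_left B hj, reflTransGen_inducedAdj_mono Finset.subset_union_left h⟩⟩
  rintro ⟨-, h⟩
  induction h with
  | refl => exact ⟨hi, .refl⟩
  | tail _ hbc ih =>
    obtain ⟨hb, ih⟩ := ih
    have hc := (Finset.mem_union.1 hbc.2.1).resolve_right (hAB _ hb _ · hbc.2.2)
    exact ⟨hc, ih.tail ⟨hb, hc, hbc.2.2⟩⟩

theorem commGame_union {A B : Finset α} (hdisj : Disjoint A B)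
    (hAB : ∀ a ∈ A, ∀ b ∈ B, ¬ G.Adj a b) :
    commGame G v (A ∪ B) = commGame G v A + commGame G v B := by
  have hBA : ∀ b ∈ B, ∀ a ∈ A, ¬ G.Adj b a := fun b hb a ha h => hAB a ha b hb h.symm
  have himage : (A ∪ B).image (compOf G (A ∪ B)) =
      A.image (compOf G A) ∪ B.image (compOf G B) := by
    rw [Finset.image_union, Finset.image_congr fun i hi => compOf_union_left hAB hi,
      Finset.union_comm A B, Finset.image_congr fun i hi => compOf_union_left hBA hi]
  rw [commGame, himage, Finset.sum_union, commGame, commGame]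
  simp only [Finset.disjoint_left, Finset.mem_image, not_exists, not_and]
  rintro _ ⟨i, hi, rfl⟩ j hj hji
  exact Finset.disjoint_left.1 hdisj hi (compOf_subset B j (hji ▸ mem_compOf_self hi))

theorem commGame_insert_of_forall_not_adj {A : Finset α} {x : α} (hx : x ∉ A)
    (h : ∀ a ∈ A, ¬ G.Adj x a) : commGame G v (insert x A) = v {x} + commGame G v A := by
  rw [Finset.insert_eq, commGame_union (Finset.disjoint_singleton_left.2 hx) (by simpa),
    commGame_singleton]

theorem commGame_eq_sum_of_forall_not_adj {A : Finset α}
    (h : ∀ a ∈ A, ∀ b ∈ A, ¬ G.Adj a b) : commGame G v A = ∑ x ∈ A, v {x} := by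
  induction A using Finset.induction_on with
  | empty => simp [commGame]
  | @insert x A hx ih =>
    rw [commGame_insert_of_forall_not_adj hx fun a ha => h x (by simp) a (by simp [ha]),
      Finset.sum_insert hx, ih fun a ha b hb => h a (by simp [ha]) b (by simp [hb])]

end Game

end CommunicationGame

section Preservation

variable [Fintype α] [DecidableEq α] {G : SimpleGraph α} {ω : α → ℝ} {n : ℕ}

theorem commGame_eq_of_isCompleteGraph (hG : IsCompleteGraph G) {v : Finset α → ℝ}
    (hv0 : v ∅ = 0) : commGame G v = v := by
  funext S
  obtain rfl | ⟨c, hc⟩ := S.eq_empty_or_nonempty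
  · simp [commGame, hv0]
  · exact (isConnectedIn_of_forall_adj hc fun x _ hxc => hG c x (Ne.symm hxc)).commGame_eq

theorem preserves_of_isCompleteGraph (hG : IsCompleteGraph G) : Preserves G ω (fun _ => n) :=
  fun _ hv0 hv => by rwa [commGame_eq_of_isCompleteGraph hG hv0]

theorem preserves_of_isStarGraph (hω : ∀ i, 0 < ω i) (hG : IsStarGraph G) :
    Preserves G ω (fun _ => n) := by
  obtain ⟨c, hc⟩ := hG
  intro v hv0 hv
  have hcon : ∀ A, c ∈ A → commGame G v A = v A := fun A hcA =>
    (isConnectedIn_of_forall_adj hcA fun x _ hxc =>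
      (hc c x).2 ⟨Ne.symm hxc, Or.inl rfl⟩).commGame_eq
  have hsum : ∀ A, c ∉ A → commGame G v A = ∑ x ∈ A, v {x} := fun A hcA =>
    commGame_eq_sum_of_forall_not_adj fun a ha b hb hab => by
      rcases ((hc a b).1 hab).2 with rfl | rfl <;> contradiction
  refine wconvex_const_iff.2 fun S T hST => ?_
  have hT : ∀ {i}, i ∈ S → i ∈ T := fun hi => hST.subset hi
  by_cases hcS : c ∈ S
  · -- Only the centre's term changes, and it grows.
    refine (wconvex_const_iff.1 hv S T hST).trans (Finset.sum_le_sum fun i hi => ?_)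
    refine mul_le_mul_of_nonneg_left ?_ (hω i).le
    by_cases hic : i = c
    · subst hic
      rw [hcon T (hT hcS), hcon S hcS, hsum _ (Finset.notMem_erase i T),
        hsum _ (Finset.notMem_erase i S)]
      linarith [hv.sub_sum_singleton_mono hω hv0 (Finset.erase_subset_erase i hST.subset)]
    · rw [hcon T (hT hcS), hcon S hcS, hcon _ (Finset.mem_erase.2 ⟨Ne.symm hic, hT hcS⟩),
        hcon _ (Finset.mem_erase.2 ⟨Ne.symm hic, hcS⟩)]
  · refine Finset.sum_nonneg fun i hi => mul_nonneg (hω i).le ?_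
    have hic : i ≠ c := ne_of_mem_of_not_mem hi hcS
    rw [hsum S hcS, hsum _ fun h => hcS (Finset.mem_of_mem_erase h),
      ← Finset.add_sum_erase _ _ hi]
    by_cases hcT : c ∈ T
    · rw [hcon T hcT, hcon _ (Finset.mem_erase.2 ⟨Ne.symm hic, hcT⟩)]
      have := hv.add_singleton_le hω hv0 (Finset.notMem_erase i T)
      rw [Finset.insert_erase (hT hi)] at this
      linarith
    · rw [hsum T hcT, hsum _ fun h => hcT (Finset.mem_of_mem_erase h),
        ← Finset.add_sum_erase _ _ (hT hi)]
      linarith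

end Preservation

section Graphs

variable {G : SimpleGraph α}

def HasNonCliqueFourCycle (G : SimpleGraph α) : Prop :=
  ∃ a b c d : α, a ≠ b ∧ a ≠ c ∧ a ≠ d ∧ b ≠ c ∧ b ≠ d ∧ c ≠ d ∧
    G.Adj a b ∧ G.Adj b c ∧ G.Adj c d ∧ G.Adj d a ∧ ¬G.Adj b d

def FourPathChordal (G : SimpleGraph α) : Prop :=
  ∀ ⦃a b c d : α⦄,
    a ≠ c → b ≠ d → G.Adj a b → G.Adj b c → G.Adj c d → G.Adj a c

theorem fourPathChordal_of_forall_not (h4 : ¬Has4Path G) (h3 : ¬Has3Pan G)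
    (hC : ¬HasNonCliqueFourCycle G) : FourPathChordal G := by
  intro a b c d hac hbd hab hbc hcd
  by_contra hnac
  by_cases had : a = d
  · exact hnac (had ▸ hcd.symm)
  have hca : ¬G.Adj c a := fun h => hnac h.symm
  by_cases hbd' : G.Adj b d <;> by_cases hda : G.Adj d a
  · exact hC ⟨b, c, d, a, hbc.ne, hbd, hab.ne', hcd.ne, hac.symm, Ne.symm had,
      hbc, hcd, hda, hab, hca⟩
  · exact h3 ⟨b, c, d, a, hbc.ne, hbd, hab.ne', hcd.ne, hac.symm, Ne.symm had,
      hbc, hcd, hbd'.symm, hab.symm, hca, hda⟩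
  · exact hC ⟨a, b, c, d, hab.ne, hac, had, hbc.ne, hbd, hcd.ne, hab, hbc, hcd, hda, hbd'⟩
  · exact h4 ⟨a, b, c, d, hab.ne, hac, had, hbc.ne, hbd, hcd.ne, hab, hbc, hcd, hnac,
      fun h => hda h.symm, hbd'⟩

namespace FourPathChordal

theorem eq_or_adj_or_exists_adj_adj (h : FourPathChordal G) {p q : α} (hpq : G.Reachable p q) :
    p = q ∨ G.Adj p q ∨ ∃ c, G.Adj p c ∧ G.Adj c q := by
  rw [SimpleGraph.reachable_iff_reflTransGen] at hpq
  induction hpq with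
  | refl => exact .inl rfl
  | @tail v w _ hvw ih =>
    rcases ih with rfl | hpv | ⟨c, hpc, hcv⟩
    · exact .inr (.inl hvw)
    · exact .inr (.inr ⟨v, hpv, hvw⟩)
    · by_cases hpv : p = v
      · exact .inr (.inl (hpv ▸ hvw))
      by_cases hcw : c = w
      · exact .inr (.inl (hcw ▸ hpc))
      exact .inr (.inr ⟨v, h hpv hcw hpc hcv hvw, hvw⟩)

theorem exists_adj_adj (h : FourPathChordal G) (hG : G.Preconnected) {p q : α} (hpq : p ≠ q)
    (hn : ¬G.Adj p q) : ∃ c, G.Adj p c ∧ G.Adj c q :=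
  ((h.eq_or_adj_or_exists_adj_adj (hG p q)).resolve_left hpq).resolve_left hn

theorem adj_of_adj_of_adj (h : FourPathChordal G) (hG : G.Preconnected) {p q c : α}
    (hpq : p ≠ q) (hpc : G.Adj p c) (hcq : G.Adj c q) {x : α} (hxc : x ≠ c) : G.Adj c x := by
  by_contra hcx
  obtain ⟨d, hcd, hdx⟩ := h.exists_adj_adj hG hxc.symm hcx
  obtain ⟨r, hrc, hrd⟩ : ∃ r, G.Adj r c ∧ r ≠ d := by
    by_cases hpd : p = d
    · exact ⟨q, hcq.symm, fun hqd => hpq (hpd.trans hqd.symm)⟩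
    · exact ⟨p, hpc, hpd⟩
  exact hcx (h hxc hrd.symm hdx.symm hcd.symm hrc.symm).symm

theorem isCompleteGraph_or_isStarGraph (h : FourPathChordal G) (hG : G.Preconnected) :
    IsCompleteGraph G ∨ IsStarGraph G := by
  by_cases hK : IsCompleteGraph G
  · exact .inl hK
  obtain ⟨p, q, hpq, hn⟩ : ∃ p q, p ≠ q ∧ ¬G.Adj p q := by
    simpa [IsCompleteGraph] using hK
  obtain ⟨c, hpc, hcq⟩ := h.exists_adj_adj hG hpq hn
  have hub : ∀ x, x ≠ c → G.Adj c x := fun x => h.adj_of_adj_of_adj hG hpq hpc hcq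
  refine .inr ⟨c, fun x y => ⟨fun hxy => ⟨hxy.ne, ?_⟩, ?_⟩⟩
  · by_contra! hxy'
    obtain ⟨hxc, hyc⟩ := hxy'
    have hx : ∀ r, r ≠ x → G.Adj r x := fun r hrx => by
      by_cases hrc : r = c
      · exact hrc ▸ hub x hxc
      · exact h hrx hyc.symm (hub r hrc).symm (hub x hxc) hxy
    have hpx : p ≠ x := fun hpx => hn (hpx ▸ (hx q (hpx ▸ hpq.symm)).symm)
    have hqx : q ≠ x := fun hqx => hn (hqx ▸ hx p (hqx ▸ hpq))
    exact hn (h hpq hxc (hx p hpx) (hx q hqx).symm (hub q hcq.ne').symm)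
  · rintro ⟨hne, rfl | rfl⟩
    · exact hub y hne.symm
    · exact (hub x hne).symm

end FourPathChordal

theorem not_hasNonCliqueFourCycle_of_cycleComplete (hG : CycleComplete G) :
    ¬HasNonCliqueFourCycle G := by
  rintro ⟨a, b, c, d, hab, hac, had, hbc, hbd, hcd, hab', hbc', hcd', hda', hnbd⟩
  let w : G.Walk a a := .cons hab' (.cons hbc' (.cons hcd' (.cons hda' .nil)))
  have hw : w.IsCycle := by
    simp [w, SimpleGraph.Walk.cons_isCycle_iff, hab, hac, had, hbc, hbd, hcd, hab.symm, hac.symm,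
      had.symm]
  exact hnbd (hG a w hw b (by simp [w]) d (by simp [w]) hbd)

theorem IsStarGraph.eq_or_eq_of_adj_of_adj (hG : IsStarGraph G) {x y z w : α}
    (hxy : G.Adj x y) (hzw : G.Adj z w) : x = z ∨ x = w ∨ y = z ∨ y = w := by
  obtain ⟨c, hc⟩ := hG
  rcases ((hc x y).1 hxy).2 with rfl | rfl <;> rcases ((hc z w).1 hzw).2 with rfl | rfl <;> simp

theorem IsStarGraph.not_isCycle (hG : IsStarGraph G) {u : α} (p : G.Walk u u) : ¬p.IsCycle := by
  obtain ⟨c, hc⟩ := hG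
  -- A cycle through a leaf would enter and leave it through the centre.
  have leaf : ∀ {v} (q : G.Walk v v), q.IsCycle → v ≠ c → False := fun q hq hvc => by
    have h1 := ((hc _ _).1 (q.adj_snd hq.not_nil)).2.resolve_left hvc
    have h2 := ((hc _ _).1 (q.adj_penultimate hq.not_nil)).2.resolve_right hvc
    exact hq.snd_ne_penultimate (h1.trans h2.symm)
  intro hp
  by_cases huc : u = c
  · exact leaf _ (hp.rotate (p.getVert_mem_support 1)) (huc ▸ (p.adj_snd hp.not_nil).ne')
  · exact leaf p hp huc

theorem IsStarGraph.cycleComplete (hG : IsStarGraph G) : CycleComplete G :=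
  fun _ p hp => absurd hp (hG.not_isCycle p)

theorem IsStarGraph.not_has4Path (hG : IsStarGraph G) : ¬Has4Path G := by
  rintro ⟨i, j, k, l, -, hik, hil, hjk, hjl, -, hij, -, hkl, -⟩
  rcases hG.eq_or_eq_of_adj_of_adj hij hkl with h | h | h | h <;> contradiction

theorem IsStarGraph.not_has3Pan (hG : IsStarGraph G) : ¬Has3Pan G := by
  rintro ⟨i, j, k, l, hij, hik, -, -, hjl, hkl, -, hjk, -, hil, -⟩
  rcases hG.eq_or_eq_of_adj_of_adj hjk hil with h | h | h | h
  exacts [hij h.symm, hjl h, hik h.symm, hkl h]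

theorem IsCompleteGraph.cycleComplete (hG : IsCompleteGraph G) : CycleComplete G :=
  fun _ _ _ x _ y _ hxy => hG x y hxy

theorem IsCompleteGraph.not_has4Path (hG : IsCompleteGraph G) : ¬Has4Path G :=
  fun ⟨i, _, k, _, _, hik, _, _, _, _, _, _, _, hnik, _⟩ => hnik (hG i k hik)

theorem IsCompleteGraph.not_has3Pan (hG : IsCompleteGraph G) : ¬Has3Pan G :=
  fun ⟨_, j, _, l, _, _, _, _, hjl, _, _, _, _, _, hnjl, _⟩ => hnjl (hG j l hjl)

end Graphs

section Counterexamples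

variable [Fintype α] [DecidableEq α] {G : SimpleGraph α} {ω : α → ℝ} {n : ℕ}

theorem not_preserves_of_has4Path (hω : ∀ i, 0 < ω i) (h : Has4Path G) :
    ¬Preserves G ω (fun _ => n) := by
  obtain ⟨i, j, k, l, hij, hik, hil, hjk, hjl, hkl, aij, ajk, akl, nik, nil, njl⟩ := h
  intro hP
  have hgap := (hP _ (forkGame_empty ω k i l)
    (wconvex_forkGame hω hik.symm hkl hil)).nonneg_of_four hij hik hil hjk hjl hkl
  have c_kl := isConnectedIn_pair akl
  have c_jk := isConnectedIn_pair ajk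
  have c_jkl := c_kl.insert_of_adj (by simp) ajk
  rw [Finset.pair_comm j l, Finset.insert_comm i l,
    commGame_insert_of_forall_not_adj (x := l) (A := {i, j}) (by simp [hil.symm, hjl.symm])
      (by simp [nil, njl, G.adj_comm]),
    commGame_insert_of_forall_not_adj (x := i) (A := {k, l}) (by simp [hik, hil])
      (by simp [nik, nil]),
    commGame_insert_of_forall_not_adj (x := i) (A := {k}) (by simp [hik]) (by simp [nik]),
    (c_jkl.insert_of_adj (by simp) aij).commGame_eq, c_jkl.commGame_eq,
    (c_jk.insert_of_adj (by simp) aij).commGame_eq, c_kl.commGame_eq, c_jk.commGame_eq,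
    (isConnectedIn_pair aij).commGame_eq, commGame_singleton] at hgap
  -- `hgap` now reads `0 ≤ -ω j * ω k`.
  simp [forkGame, unanimityGame, Finset.insert_subset_iff, -Finset.subset_singleton_iff, hij,
    hik, hil, hkl, hik.symm, hil.symm, hjk.symm, hjl.symm, hkl.symm] at hgap
  nlinarith [mul_pos (hω j) (hω k)]

theorem not_preserves_of_has3Pan (hω : ∀ i, 0 < ω i) (h : Has3Pan G) :
    ¬Preserves G ω (fun _ => n) := by
  obtain ⟨i, j, k, l, hij, hik, hil, hjk, hjl, hkl, aij, ajk, aki, ail, njl, nkl⟩ := h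
  intro hP
  have hgap := (hP _ (forkGame_empty ω j k l) (wconvex_forkGame hω hjk hjl hkl)).nonneg_of_four
    hjl.symm hil.symm hkl.symm hij.symm hjk hik
  have c_ik := isConnectedIn_pair aki.symm
  have c_ji := isConnectedIn_pair aij.symm
  have c_jik := c_ik.insert_of_adj (by simp) aij.symm
  rw [commGame_insert_of_forall_not_adj (x := l) (A := {j, k}) (by simp [hjl.symm, hkl.symm])
      (by simp [njl, nkl, G.adj_comm]),
    commGame_insert_of_forall_not_adj (x := l) (A := {j}) (by simp [hjl.symm])
      (by simp [njl, G.adj_comm]),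
    (c_jik.insert_of_adj (by simp) ail.symm).commGame_eq, c_jik.commGame_eq,
    (c_ik.insert_of_adj (by simp) ail.symm).commGame_eq,
    (c_ji.insert_of_adj (by simp) ail.symm).commGame_eq, c_ji.commGame_eq,
    (isConnectedIn_pair ail.symm).commGame_eq, (isConnectedIn_pair ajk).commGame_eq,
    commGame_singleton] at hgap
  -- `hgap` now reads `0 ≤ -ω i * ω j`.
  simp [forkGame, unanimityGame, Finset.insert_subset_iff, -Finset.subset_singleton_iff, hjk,
    hjl, hkl, hij.symm, hik.symm, hil.symm, hjk.symm, hjl.symm, hkl.symm] at hgap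
  nlinarith [mul_pos (hω i) (hω j)]

theorem not_preserves_of_hasNonCliqueFourCycle (hω : ∀ i, 0 < ω i)
    (h : HasNonCliqueFourCycle G) : ¬Preserves G ω (fun _ => n) := by
  obtain ⟨a, b, c, d, hab, hac, had, hbc, hbd, hcd, aab, abc, acd, ada, nbd⟩ := h
  intro hP
  have hgap := (hP _ (by simp [unanimityGame])
    (wconvex_unanimityGame (fun i => (hω i).le) {b, d})).nonneg_of_four
      hab had hac hbd hbc hcd.symm
  have c_dc := isConnectedIn_pair acd.symm
  have c_bdc := c_dc.insert_of_adj (by simp) abc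
  rw [commGame_insert_of_forall_not_adj (x := b) (A := {d}) (by simp [hbd]) (by simp [nbd]),
    (c_bdc.insert_of_adj (by simp) aab).commGame_eq, c_bdc.commGame_eq,
    (c_dc.insert_of_adj (by simp) ada.symm).commGame_eq,
    ((isConnectedIn_pair abc).insert_of_adj (by simp) aab).commGame_eq,
    (isConnectedIn_of_forall_adj (Finset.mem_insert_self a {b, d})
      (by simp [aab, ada.symm])).commGame_eq,
    (isConnectedIn_pair ada.symm).commGame_eq, (isConnectedIn_pair aab).commGame_eq,
    commGame_singleton] at hgap
  -- `hgap` now reads `0 ≤ -ω a`.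
  simp [unanimityGame, Finset.insert_subset_iff, -Finset.subset_singleton_iff, hbc, hbd,
    hab.symm, had.symm, hbd.symm, hcd.symm] at hgap
  linarith [hω a]

end Counterexamples

/-- For a connected graph `G` and a weight system with the trivial ordered partition `Σ = (N)`
(all priorities equal to `1`), the following are equivalent: (1) `G` preserves
`(ω,Σ)`-convexity; (2) `G` is cycle-complete and contains no restricted `4`-path or `3`-pan
subgraph; (3) `G` is a complete graph or a star. -/
theorem preserves_trivial_partition_tfae [Fintype α] [DecidableEq α]
    (G : SimpleGraph α) (hG : G.Connected) (ω : α → ℝ) (hω : ∀ i, 0 < ω i) :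
    List.TFAE
      [Preserves G ω (fun _ => 1),
       CycleComplete G ∧ ¬Has4Path G ∧ ¬Has3Pan G,
       IsCompleteGraph G ∨ IsStarGraph G] := by
  tfae_have 1 → 3 := fun hP =>
    (fourPathChordal_of_forall_not (not_preserves_of_has4Path hω · hP)
      (not_preserves_of_has3Pan hω · hP)
      (not_preserves_of_hasNonCliqueFourCycle hω · hP)).isCompleteGraph_or_isStarGraph
      hG.preconnected
  tfae_have 2 → 3 := fun ⟨hC, h4, h3⟩ =>
    (fourPathChordal_of_forall_not h4 h3
      (not_hasNonCliqueFourCycle_of_cycleComplete hC)).isCompleteGraph_or_isStarGraph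
      hG.preconnected
  tfae_have 3 → 1 := fun h => h.elim preserves_of_isCompleteGraph (preserves_of_isStarGraph hω)
  tfae_have 3 → 2 := fun h => h.elim
    (fun hK => ⟨hK.cycleComplete, hK.not_has4Path, hK.not_has3Pan⟩)
    (fun hS => ⟨hS.cycleComplete, hS.not_has4Path, hS.not_has3Pan⟩)
  tfae_finish

end
end

section
/- Let G=(N,E) be a star graph on a finite player set N (one vertex, the center, is adjacent to all other vertices and there are no other edges), and let (ω,Σ) be any weight system on N with Σ = (N) the trivial ordered partition. Then G preserves (ω,Σ)-convexity: for every (ω,Σ)-convex TU-game (N,v), the communication game (N,v^G) is (ω,Σ)-convex. -/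
open Finset

variable {α : Type*}

noncomputable section

open scoped Classical

lemma wbar_eq [DecidableEq α] (ω : α → ℝ) {U : Finset α} {i : α} (hi : i ∈ U) :
    wbar ω (fun _ => 1) U i = ω i := by
  unfold wbar
  rw [if_pos ⟨hi, (Finset.sup_const ⟨i, hi⟩ 1).symm⟩]

lemma compOf_center_mem [Fintype α] [DecidableEq α] {G : SimpleGraph α} {c : α}
    (hc : ∀ x y : α, G.Adj x y ↔ x ≠ y ∧ (x = c ∨ y = c))
    {S : Finset α} (hcS : c ∈ S) {i : α} (hi : i ∈ S) : compOf G S i = S := by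
  have toC : ∀ a ∈ S, Relation.ReflTransGen (fun a b => a ∈ S ∧ b ∈ S ∧ G.Adj a b) a c := by
    intro a ha
    by_cases hac : a = c
    · subst hac; exact Relation.ReflTransGen.refl
    · exact Relation.ReflTransGen.single ⟨ha, hcS, (hc a c).2 ⟨hac, Or.inr rfl⟩⟩
  have fromC : ∀ a ∈ S, Relation.ReflTransGen (fun a b => a ∈ S ∧ b ∈ S ∧ G.Adj a b) c a := by
    intro a ha
    by_cases hac : c = a
    · subst hac; exact Relation.ReflTransGen.refl
    · exact Relation.ReflTransGen.single ⟨hcS, ha, (hc c a).2 ⟨hac, Or.inl rfl⟩⟩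
  ext j
  simp only [compOf, mem_filter]
  constructor
  · exact fun h => h.1
  · exact fun hj => ⟨hj, (toC i hi).trans (fromC j hj)⟩

lemma compOf_singleton [Fintype α] [DecidableEq α] {G : SimpleGraph α} {c : α}
    (hc : ∀ x y : α, G.Adj x y ↔ x ≠ y ∧ (x = c ∨ y = c))
    {S : Finset α} (hcS : c ∉ S) {i : α} (hi : i ∈ S) : compOf G S i = {i} := by
  have hrel : ∀ a b : α, Relation.ReflTransGen (fun a b => a ∈ S ∧ b ∈ S ∧ G.Adj a b) a b → a = b := by
    intro a b h
    induction h with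
    | refl => rfl
    | tail _ hr ih =>
      exfalso
      obtain ⟨hx, hy, hadj⟩ := hr
      rcases ((hc _ _).1 hadj).2 with h1 | h1
      · exact hcS (h1 ▸ hx)
      · exact hcS (h1 ▸ hy)
  ext j
  simp only [compOf, mem_filter, mem_singleton]
  constructor
  · exact fun h => (hrel _ _ h.2).symm
  · rintro rfl; exact ⟨hi, Relation.ReflTransGen.refl⟩

lemma commGame_center_mem [Fintype α] [DecidableEq α] {G : SimpleGraph α} {c : α}
    (hc : ∀ x y : α, G.Adj x y ↔ x ≠ y ∧ (x = c ∨ y = c))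
    (v : Finset α → ℝ) {S : Finset α} (hcS : c ∈ S) : commGame G v S = v S := by
  unfold commGame
  have himg : S.image (compOf G S) = {S} := by
    ext A
    simp only [mem_image, mem_singleton]
    constructor
    · rintro ⟨i, hi, rfl⟩; exact compOf_center_mem hc hcS hi
    · rintro rfl; exact ⟨c, hcS, compOf_center_mem hc hcS hcS⟩
  rw [himg, Finset.sum_singleton]

lemma commGame_center_notMem [Fintype α] [DecidableEq α] {G : SimpleGraph α} {c : α}
    (hc : ∀ x y : α, G.Adj x y ↔ x ≠ y ∧ (x = c ∨ y = c))
    (v : Finset α → ℝ) {S : Finset α} (hcS : c ∉ S) :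
    commGame G v S = ∑ i ∈ S, v {i} := by
  unfold commGame
  rw [Finset.image_congr (fun i hi => compOf_singleton hc hcS hi)]
  rw [Finset.sum_image (fun x _ y _ h => Finset.singleton_injective h)]

lemma superadd_insert [DecidableEq α] {ω : α → ℝ} (hω : ∀ i, 0 < ω i)
    {v : Finset α → ℝ} (hv0 : v ∅ = 0) (hv : WConvex ω (fun _ => 1) v)
    {A : Finset α} {j : α} (hj : j ∉ A) : v A + v {j} ≤ v (insert j A) := by
  rcases A.eq_empty_or_nonempty with rfl | ⟨a, ha⟩
  · simp [hv0]
  · have hss : ({j} : Finset α) ⊂ insert j A := by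
      refine ⟨Finset.singleton_subset_iff.2 (mem_insert_self _ _), fun h => ?_⟩
      have := h (mem_insert_of_mem ha)
      rw [Finset.mem_singleton] at this
      exact hj (this ▸ ha)
    have h := hv {j} (insert j A) hss
    rw [Finset.sum_singleton, wbar_eq ω (mem_insert_self j A),
      Finset.erase_insert hj, Finset.erase_singleton, hv0] at h
    have := (mul_nonneg_iff_of_pos_left (hω j)).1 h
    linarith

lemma superadd [DecidableEq α] {ω : α → ℝ} (hω : ∀ i, 0 < ω i)
    {v : Finset α → ℝ} (hv0 : v ∅ = 0) (hv : WConvex ω (fun _ => 1) v)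
    {A B : Finset α} (hAB : A ⊆ B) : v A + ∑ j ∈ B \ A, v {j} ≤ v B := by
  have key : ∀ D : Finset α, Disjoint D A → v A + ∑ j ∈ D, v {j} ≤ v (A ∪ D) := by
    intro D
    induction D using Finset.induction_on with
    | empty => simp
    | @insert j D hjD ih =>
      intro hdisj
      have hjA : j ∉ A := fun h =>
        (Finset.disjoint_left.1 hdisj (mem_insert_self j D)) h
      have hdisj' : Disjoint D A := hdisj.mono_left (Finset.subset_insert j D)
      have hjAD : j ∉ A ∪ D := by
        simp only [Finset.mem_union, not_or]; exact ⟨hjA, hjD⟩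
      have h1 := ih hdisj'
      have h2 := superadd_insert hω hv0 hv hjAD
      rw [Finset.sum_insert hjD]
      have : A ∪ insert j D = insert j (A ∪ D) := by
        ext x; simp [Finset.mem_insert, Finset.mem_union, or_left_comm]
      rw [this]
      linarith
  have h := key (B \ A) (Finset.sdiff_disjoint)
  rwa [Finset.union_sdiff_of_subset hAB] at h

theorem star_preserves_trivial_partition' [Fintype α] [DecidableEq α]
    (G : SimpleGraph α) (hstar : ∃ c : α, ∀ x y : α, G.Adj x y ↔ x ≠ y ∧ (x = c ∨ y = c))
    (ω : α → ℝ) (hω : ∀ i, 0 < ω i) (v : Finset α → ℝ) (hv0 : v ∅ = 0)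
    (hv : WConvex ω (fun _ => 1) v) : WConvex ω (fun _ => 1) (commGame G v) := by
  obtain ⟨c, hc⟩ := hstar
  intro S T hST
  have hsub := hST.subset
  by_cases hcT : c ∈ T
  · by_cases hcS : c ∈ S
    · -- case c ∈ S
      have hterm : ∀ i ∈ S.erase c,
          wbar ω (fun _ => 1) T i * (commGame G v T - commGame G v (T.erase i)
            - commGame G v S + commGame G v (S.erase i))
          = ω i * (v T - v (T.erase i) - v S + v (S.erase i)) := by
        intro i hi
        obtain ⟨hic, hiS⟩ := Finset.mem_erase.1 hi
        rw [wbar_eq ω (hsub hiS), commGame_center_mem hc v hcT,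
          commGame_center_mem hc v (Finset.mem_erase.2 ⟨Ne.symm hic, hcT⟩),
          commGame_center_mem hc v hcS,
          commGame_center_mem hc v (Finset.mem_erase.2 ⟨Ne.symm hic, hcS⟩)]
      have hvterm : ∀ i ∈ S.erase c,
          wbar ω (fun _ => 1) T i * (v T - v (T.erase i) - v S + v (S.erase i))
          = ω i * (v T - v (T.erase i) - v S + v (S.erase i)) := by
        intro i hi
        rw [wbar_eq ω (hsub (Finset.mem_erase.1 hi).2)]
      have hconv := hv S T hST
      rw [← Finset.add_sum_erase S _ hcS, Finset.sum_congr rfl hvterm,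
        wbar_eq ω (hsub hcS)] at hconv
      rw [← Finset.add_sum_erase S _ hcS, Finset.sum_congr rfl hterm,
        wbar_eq ω (hsub hcS), commGame_center_mem hc v hcT, commGame_center_mem hc v hcS,
        commGame_center_notMem hc v (Finset.notMem_erase c T),
        commGame_center_notMem hc v (Finset.notMem_erase c S)]
      -- compare the c-terms
      have hsuper := superadd hω hv0 hv (Finset.erase_subset_erase c hsub)
      rw [Finset.sum_sdiff_eq_sub (Finset.erase_subset_erase c hsub)] at hsuper
      have hle : ω c * (v T - v (T.erase c) - v S + v (S.erase c)) ≤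
          ω c * (v T - ∑ i ∈ T.erase c, v {i} - v S + ∑ i ∈ S.erase c, v {i}) := by
        apply mul_le_mul_of_nonneg_left _ (hω c).le
        linarith
      linarith
    · -- case c ∈ T \ S
      have hterm : ∀ i ∈ S,
          wbar ω (fun _ => 1) T i * (commGame G v T - commGame G v (T.erase i)
            - commGame G v S + commGame G v (S.erase i))
          = ω i * (v T - v (T.erase i) - v {i}) := by
        intro i hi
        have hic : c ≠ i := fun h => hcS (h ▸ hi)
        rw [wbar_eq ω (hsub hi), commGame_center_mem hc v hcT,
          commGame_center_mem hc v (Finset.mem_erase.2 ⟨hic, hcT⟩),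
          commGame_center_notMem hc v hcS,
          commGame_center_notMem hc v (fun h => hcS (Finset.erase_subset i S h)),
          Finset.sum_erase_eq_sub hi]
        ring
      rw [Finset.sum_congr rfl hterm]
      apply Finset.sum_nonneg
      intro i hi
      have hic : c ≠ i := fun h => hcS (h ▸ hi)
      have hss : ({i} : Finset α) ⊂ T := by
        refine ⟨Finset.singleton_subset_iff.2 (hsub hi), fun h => ?_⟩
        have := h hcT
        rw [Finset.mem_singleton] at this
        exact hic this
      have h := hv {i} T hss
      rw [Finset.sum_singleton, wbar_eq ω (hsub hi), Finset.erase_singleton, hv0] at h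
      have := (mul_nonneg_iff_of_pos_left (hω i)).1 h
      have h2 : 0 ≤ v T - v (T.erase i) - v {i} := by linarith
      exact mul_nonneg (hω i).le h2
  · -- case c ∉ T
    have hcS : c ∉ S := fun h => hcT (hsub h)
    apply le_of_eq
    symm
    apply Finset.sum_eq_zero
    intro i hi
    rw [commGame_center_notMem hc v hcT,
      commGame_center_notMem hc v (fun h => hcT (Finset.erase_subset i T h)),
      commGame_center_notMem hc v hcS,
      commGame_center_notMem hc v (fun h => hcS (Finset.erase_subset i S h)),
      Finset.sum_erase_eq_sub (hsub hi), Finset.sum_erase_eq_sub hi]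
    ring

/-- A star graph preserves `(ω,Σ)`-convexity for every weight system with the trivial ordered
partition `Σ = (N)` (all priorities equal to `1`). -/
theorem star_preserves_trivial_partition [Fintype α] [DecidableEq α]
    (G : SimpleGraph α) (hstar : IsStarGraph G)
    (ω : α → ℝ) (hω : ∀ i, 0 < ω i) :
    Preserves G ω (fun _ => 1) := by
  intro v hv0 hv
  exact star_preserves_trivial_partition' G hstar ω hω v hv0 hv

end
end

section
/- Let N = {1,2,3,4} and let G be the 3-pan graph on N with edge set E = {{1,2},{1,4},{2,4},{2,3}}. Let (ω,Σ) be any weight system on N whose priorities satisfy p(2) ≥ max(p(1),p(4)) and max(p(1),p(4)) ≥ p(3). Then G does not preserve (ω,Σ)-convexity: there exists an (ω,Σ)-convex TU-game (N,v) whose communication game (N,v^G) is not (ω,Σ)-convex. -/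
open Finset

variable {α : Type*}

noncomputable section

open scoped Classical

/-- The `3`-pan graph on `N = {1,2,3,4}` (encoded as `Fin 4 = {0,1,2,3}`, player `i`
corresponding to `i - 1`) with edge set `{{1,2},{1,4},{2,4},{2,3}}`. -/
def panGraph : SimpleGraph (Fin 4) :=
  SimpleGraph.fromEdgeSet {s(0, 1), s(0, 3), s(1, 3), s(1, 2)}

-- ===================== auxiliary machinery =====================

lemma pan_adj {x y : Fin 4} (h : panGraph.Adj x y) :
    (x=0∧y=1)∨(x=1∧y=0)∨(x=0∧y=3)∨(x=3∧y=0)∨(x=1∧y=3)∨(x=3∧y=1)∨(x=1∧y=2)∨(x=2∧y=1) := by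
  rw [panGraph, SimpleGraph.fromEdgeSet_adj] at h
  obtain ⟨hm, -⟩ := h
  simp only [Set.mem_insert_iff, Set.mem_singleton_iff, Sym2.eq_iff] at hm
  tauto

lemma adj01 : panGraph.Adj 0 1 := by
  rw [panGraph, SimpleGraph.fromEdgeSet_adj]; exact ⟨by simp, by decide⟩
lemma adj03 : panGraph.Adj 0 3 := by
  rw [panGraph, SimpleGraph.fromEdgeSet_adj]; exact ⟨by simp, by decide⟩
lemma adj13 : panGraph.Adj 1 3 := by
  rw [panGraph, SimpleGraph.fromEdgeSet_adj]; exact ⟨by simp, by decide⟩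
lemma adj12 : panGraph.Adj 1 2 := by
  rw [panGraph, SimpleGraph.fromEdgeSet_adj]; exact ⟨by simp, by decide⟩

abbrev relW (W : Finset (Fin 4)) (x y : Fin 4) : Prop := x ∈ W ∧ y ∈ W ∧ panGraph.Adj x y

lemma reach_closed {W C : Finset (Fin 4)}
    (hcl : ∀ x y : Fin 4, x ∈ C → y ∈ W → panGraph.Adj x y → y ∈ C) {i j : Fin 4}
    (hi : i ∈ C) (h : Relation.ReflTransGen (relW W) i j) : j ∈ C := by
  induction h with
  | refl => exact hi
  | tail h1 h2 ih => exact hcl _ _ ih h2.2.1 h2.2.2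

lemma compOf_eq_of_reach {W : Finset (Fin 4)} {i : Fin 4}
    (h : ∀ j ∈ W, Relation.ReflTransGen (relW W) i j) : compOf panGraph W i = W :=
  Finset.filter_true_of_mem h

lemma compOf_eq_of_closed {W C : Finset (Fin 4)} {i : Fin 4} (hCW : C ⊆ W)
    (hcl : ∀ x y : Fin 4, x ∈ C → y ∈ W → panGraph.Adj x y → y ∈ C)
    (hi : i ∈ C)
    (hreach : ∀ j ∈ C, Relation.ReflTransGen (relW W) i j) : compOf panGraph W i = C := by
  ext j
  simp only [compOf, Finset.mem_filter]
  constructor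
  · rintro ⟨hjW, hr⟩
    exact reach_closed hcl hi hr
  · intro hj
    exact ⟨hCW hj, hreach j hj⟩

-- connected sets
lemma comps_univ : ∀ i ∈ (Finset.univ : Finset (Fin 4)),
    compOf panGraph Finset.univ i = Finset.univ := by
  have e01 : relW Finset.univ 0 1 := ⟨by decide, by decide, adj01⟩
  have e03 : relW Finset.univ 0 3 := ⟨by decide, by decide, adj03⟩
  have e13 : relW Finset.univ 1 3 := ⟨by decide, by decide, adj13⟩
  have e12 : relW Finset.univ 1 2 := ⟨by decide, by decide, adj12⟩
  have e10 : relW Finset.univ 1 0 := ⟨by decide, by decide, adj01.symm⟩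
  have e30 : relW Finset.univ 3 0 := ⟨by decide, by decide, adj03.symm⟩
  have e31 : relW Finset.univ 3 1 := ⟨by decide, by decide, adj13.symm⟩
  have e21 : relW Finset.univ 2 1 := ⟨by decide, by decide, adj12.symm⟩
  intro i hi
  apply compOf_eq_of_reach
  intro j hj
  fin_cases hi <;> fin_cases hj
  exacts [.refl, .single e01, .tail (.single e01) e12, .single e03,
    .single e10, .refl, .single e12, .single e13,
    .tail (.single e21) e10, .single e21, .refl, .tail (.single e21) e13,
    .single e30, .single e31, .tail (.single e31) e12, .refl]

lemma comps_013 : ∀ i ∈ ({0,1,3} : Finset (Fin 4)),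
    compOf panGraph {0,1,3} i = {0,1,3} := by
  have e01 : relW {0,1,3} 0 1 := ⟨by decide, by decide, adj01⟩
  have e03 : relW {0,1,3} 0 3 := ⟨by decide, by decide, adj03⟩
  have e13 : relW {0,1,3} 1 3 := ⟨by decide, by decide, adj13⟩
  have e10 : relW {0,1,3} 1 0 := ⟨by decide, by decide, adj01.symm⟩
  have e30 : relW {0,1,3} 3 0 := ⟨by decide, by decide, adj03.symm⟩
  have e31 : relW {0,1,3} 3 1 := ⟨by decide, by decide, adj13.symm⟩
  intro i hi
  apply compOf_eq_of_reach
  intro j hj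
  fin_cases hi <;> fin_cases hj
  exacts [.refl, .single e01, .single e03,
    .single e10, .refl, .single e13,
    .single e30, .single e31, .refl]

lemma comps_012 : ∀ i ∈ ({0,1,2} : Finset (Fin 4)),
    compOf panGraph {0,1,2} i = {0,1,2} := by
  have e01 : relW {0,1,2} 0 1 := ⟨by decide, by decide, adj01⟩
  have e12 : relW {0,1,2} 1 2 := ⟨by decide, by decide, adj12⟩
  have e10 : relW {0,1,2} 1 0 := ⟨by decide, by decide, adj01.symm⟩
  have e21 : relW {0,1,2} 2 1 := ⟨by decide, by decide, adj12.symm⟩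
  intro i hi
  apply compOf_eq_of_reach
  intro j hj
  fin_cases hi <;> fin_cases hj
  exacts [.refl, .single e01, .tail (.single e01) e12,
    .single e10, .refl, .single e12,
    .tail (.single e21) e10, .single e21, .refl]

lemma comps_123 : ∀ i ∈ ({1,2,3} : Finset (Fin 4)),
    compOf panGraph {1,2,3} i = {1,2,3} := by
  have e12 : relW {1,2,3} 1 2 := ⟨by decide, by decide, adj12⟩
  have e13 : relW {1,2,3} 1 3 := ⟨by decide, by decide, adj13⟩
  have e21 : relW {1,2,3} 2 1 := ⟨by decide, by decide, adj12.symm⟩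
  have e31 : relW {1,2,3} 3 1 := ⟨by decide, by decide, adj13.symm⟩
  intro i hi
  apply compOf_eq_of_reach
  intro j hj
  fin_cases hi <;> fin_cases hj
  exacts [.refl, .single e12, .single e13,
    .single e21, .refl, .tail (.single e21) e13,
    .single e31, .tail (.single e31) e12, .refl]

lemma comps_13 : ∀ i ∈ ({1,3} : Finset (Fin 4)),
    compOf panGraph {1,3} i = {1,3} := by
  have e13 : relW {1,3} 1 3 := ⟨by decide, by decide, adj13⟩
  have e31 : relW {1,3} 3 1 := ⟨by decide, by decide, adj13.symm⟩
  intro i hi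
  apply compOf_eq_of_reach
  intro j hj
  fin_cases hi <;> fin_cases hj
  exacts [.refl, .single e13, .single e31, .refl]

lemma comps_12 : ∀ i ∈ ({1,2} : Finset (Fin 4)),
    compOf panGraph {1,2} i = {1,2} := by
  have e12 : relW {1,2} 1 2 := ⟨by decide, by decide, adj12⟩
  have e21 : relW {1,2} 2 1 := ⟨by decide, by decide, adj12.symm⟩
  intro i hi
  apply compOf_eq_of_reach
  intro j hj
  fin_cases hi <;> fin_cases hj
  exacts [.refl, .single e12, .single e21, .refl]

lemma comps_01 : ∀ i ∈ ({0,1} : Finset (Fin 4)),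
    compOf panGraph {0,1} i = {0,1} := by
  have e01 : relW {0,1} 0 1 := ⟨by decide, by decide, adj01⟩
  have e10 : relW {0,1} 1 0 := ⟨by decide, by decide, adj01.symm⟩
  intro i hi
  apply compOf_eq_of_reach
  intro j hj
  fin_cases hi <;> fin_cases hj
  exacts [.refl, .single e01, .single e10, .refl]

-- disconnected sets
lemma closed_cl {W C : Finset (Fin 4)}
    (h : ∀ x y : Fin 4, x ∈ C → y ∈ W → panGraph.Adj x y → y ∈ C) :
    ∀ x y : Fin 4, x ∈ C → y ∈ W → panGraph.Adj x y → y ∈ C := h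

lemma comp_023_0 : compOf panGraph ({0,2,3} : Finset (Fin 4)) 0 = {0,3} := by
  refine compOf_eq_of_closed (by decide) ?_ (by decide) ?_
  · intro x y hx hy hadj
    rcases pan_adj hadj with ⟨rfl,rfl⟩|⟨rfl,rfl⟩|⟨rfl,rfl⟩|⟨rfl,rfl⟩|⟨rfl,rfl⟩|⟨rfl,rfl⟩|⟨rfl,rfl⟩|⟨rfl,rfl⟩ <;>
      revert hx hy <;> decide
  · have e03 : relW {0,2,3} 0 3 := ⟨by decide, by decide, adj03⟩
    intro j hj
    fin_cases hj
    exacts [.refl, .single e03]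

lemma comp_023_3 : compOf panGraph ({0,2,3} : Finset (Fin 4)) 3 = {0,3} := by
  refine compOf_eq_of_closed (by decide) ?_ (by decide) ?_
  · intro x y hx hy hadj
    rcases pan_adj hadj with ⟨rfl,rfl⟩|⟨rfl,rfl⟩|⟨rfl,rfl⟩|⟨rfl,rfl⟩|⟨rfl,rfl⟩|⟨rfl,rfl⟩|⟨rfl,rfl⟩|⟨rfl,rfl⟩ <;>
      revert hx hy <;> decide
  · have e30 : relW {0,2,3} 3 0 := ⟨by decide, by decide, adj03.symm⟩
    intro j hj
    fin_cases hj
    exacts [.single e30, .refl]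

lemma comp_023_2 : compOf panGraph ({0,2,3} : Finset (Fin 4)) 2 = {2} := by
  refine compOf_eq_of_closed (by decide) ?_ (by decide) ?_
  · intro x y hx hy hadj
    rcases pan_adj hadj with ⟨rfl,rfl⟩|⟨rfl,rfl⟩|⟨rfl,rfl⟩|⟨rfl,rfl⟩|⟨rfl,rfl⟩|⟨rfl,rfl⟩|⟨rfl,rfl⟩|⟨rfl,rfl⟩ <;>
      revert hx hy <;> decide
  · intro j hj
    fin_cases hj
    exact .refl

lemma comp_23_2 : compOf panGraph ({2,3} : Finset (Fin 4)) 2 = {2} := by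
  refine compOf_eq_of_closed (by decide) ?_ (by decide) ?_
  · intro x y hx hy hadj
    rcases pan_adj hadj with ⟨rfl,rfl⟩|⟨rfl,rfl⟩|⟨rfl,rfl⟩|⟨rfl,rfl⟩|⟨rfl,rfl⟩|⟨rfl,rfl⟩|⟨rfl,rfl⟩|⟨rfl,rfl⟩ <;>
      revert hx hy <;> decide
  · intro j hj
    fin_cases hj
    exact .refl

lemma comp_23_3 : compOf panGraph ({2,3} : Finset (Fin 4)) 3 = {3} := by
  refine compOf_eq_of_closed (by decide) ?_ (by decide) ?_
  · intro x y hx hy hadj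
    rcases pan_adj hadj with ⟨rfl,rfl⟩|⟨rfl,rfl⟩|⟨rfl,rfl⟩|⟨rfl,rfl⟩|⟨rfl,rfl⟩|⟨rfl,rfl⟩|⟨rfl,rfl⟩|⟨rfl,rfl⟩ <;>
      revert hx hy <;> decide
  · intro j hj
    fin_cases hj
    exact .refl

lemma comp_02_0 : compOf panGraph ({0,2} : Finset (Fin 4)) 0 = {0} := by
  refine compOf_eq_of_closed (by decide) ?_ (by decide) ?_
  · intro x y hx hy hadj
    rcases pan_adj hadj with ⟨rfl,rfl⟩|⟨rfl,rfl⟩|⟨rfl,rfl⟩|⟨rfl,rfl⟩|⟨rfl,rfl⟩|⟨rfl,rfl⟩|⟨rfl,rfl⟩|⟨rfl,rfl⟩ <;>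
      revert hx hy <;> decide
  · intro j hj
    fin_cases hj
    exact .refl

lemma comp_02_2 : compOf panGraph ({0,2} : Finset (Fin 4)) 2 = {2} := by
  refine compOf_eq_of_closed (by decide) ?_ (by decide) ?_
  · intro x y hx hy hadj
    rcases pan_adj hadj with ⟨rfl,rfl⟩|⟨rfl,rfl⟩|⟨rfl,rfl⟩|⟨rfl,rfl⟩|⟨rfl,rfl⟩|⟨rfl,rfl⟩|⟨rfl,rfl⟩|⟨rfl,rfl⟩ <;>
      revert hx hy <;> decide
  · intro j hj
    fin_cases hj
    exact .refl

-- commGame values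
lemma commGame_conn (f : Finset (Fin 4) → ℝ) (W : Finset (Fin 4)) (hne : W.Nonempty)
    (h : ∀ i ∈ W, compOf panGraph W i = W) : commGame panGraph f W = f W := by
  unfold commGame
  rw [Finset.image_congr (g := fun _ => W) (fun i hi => h i (by simpa using hi)),
    Finset.image_const hne, Finset.sum_singleton]

lemma commGame_univ (f : Finset (Fin 4) → ℝ) :
    commGame panGraph f Finset.univ = f Finset.univ :=
  commGame_conn f _ ⟨0, by decide⟩ comps_univ

lemma commGame_013 (f : Finset (Fin 4) → ℝ) :
    commGame panGraph f {0,1,3} = f {0,1,3} :=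
  commGame_conn f _ ⟨0, by decide⟩ comps_013

lemma commGame_012 (f : Finset (Fin 4) → ℝ) :
    commGame panGraph f {0,1,2} = f {0,1,2} :=
  commGame_conn f _ ⟨0, by decide⟩ comps_012

lemma commGame_123 (f : Finset (Fin 4) → ℝ) :
    commGame panGraph f {1,2,3} = f {1,2,3} :=
  commGame_conn f _ ⟨1, by decide⟩ comps_123

lemma commGame_13 (f : Finset (Fin 4) → ℝ) :
    commGame panGraph f {1,3} = f {1,3} :=
  commGame_conn f _ ⟨1, by decide⟩ comps_13

lemma commGame_12 (f : Finset (Fin 4) → ℝ) :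
    commGame panGraph f {1,2} = f {1,2} :=
  commGame_conn f _ ⟨1, by decide⟩ comps_12

lemma commGame_01 (f : Finset (Fin 4) → ℝ) :
    commGame panGraph f {0,1} = f {0,1} :=
  commGame_conn f _ ⟨0, by decide⟩ comps_01

lemma commGame_023 (f : Finset (Fin 4) → ℝ) :
    commGame panGraph f {0,2,3} = f {0,3} + f {2} := by
  unfold commGame
  rw [show ({0,2,3} : Finset (Fin 4)) = insert 0 (insert 2 {3}) from rfl,
    Finset.image_insert, Finset.image_insert, Finset.image_singleton,
    comp_023_0, comp_023_2, comp_023_3]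
  rw [show ({{0,3},{2},{0,3}} : Finset (Finset (Fin 4))) = {{0,3},{2}} from by decide]
  rw [Finset.sum_insert (by decide), Finset.sum_singleton]

lemma commGame_23 (f : Finset (Fin 4) → ℝ) :
    commGame panGraph f {2,3} = f {2} + f {3} := by
  unfold commGame
  rw [show ({2,3} : Finset (Fin 4)) = insert 2 {3} from rfl,
    Finset.image_insert, Finset.image_singleton, comp_23_2, comp_23_3]
  rw [Finset.sum_insert (by decide), Finset.sum_singleton]

lemma commGame_02 (f : Finset (Fin 4) → ℝ) :
    commGame panGraph f {0,2} = f {0} + f {2} := by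
  unfold commGame
  rw [show ({0,2} : Finset (Fin 4)) = insert 0 {2} from rfl,
    Finset.image_insert, Finset.image_singleton, comp_02_0, comp_02_2]
  rw [Finset.sum_insert (by decide), Finset.sum_singleton]

-- ===================== the counterexample games =====================

/-- First game shape (used when `p 0 ≤ p 3`). -/
def gA (a b c : ℝ) (S : Finset (Fin 4)) : ℝ :=
  (if {2,3} ⊆ S then a else 0) + (if {0,3} ⊆ S then b else 0) - (if {0,2,3} ⊆ S then c else 0)

/-- Second game shape (used when `p 3 < p 0`). -/
def gB (a b c : ℝ) (S : Finset (Fin 4)) : ℝ :=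
  (if {0,2} ⊆ S then a else 0) + (if {0,3} ⊆ S then b else 0) - (if {0,2,3} ⊆ S then c else 0)

variable {a b c : ℝ}

lemma gA_empty : gA a b c ∅ = 0 := by
  rw [gA, if_neg (by decide), if_neg (by decide), if_neg (by decide)]; ring
lemma gB_empty : gB a b c ∅ = 0 := by
  rw [gB, if_neg (by decide), if_neg (by decide), if_neg (by decide)]; ring

lemma gA_erase0 (U : Finset (Fin 4)) : gA a b c (U.erase 0) = (if {2,3} ⊆ U then a else 0) := by
  have h1 : (0:Fin 4) ∉ ({2,3} : Finset (Fin 4)) := by decide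
  have h2 : (0:Fin 4) ∈ ({0,3} : Finset (Fin 4)) := by decide
  have h3 : (0:Fin 4) ∈ ({0,2,3} : Finset (Fin 4)) := by decide
  simp [gA, Finset.subset_erase, h1, h2, h3]

lemma gA_erase1 (U : Finset (Fin 4)) : gA a b c (U.erase 1) = gA a b c U := by
  have h1 : (1:Fin 4) ∉ ({2,3} : Finset (Fin 4)) := by decide
  have h2 : (1:Fin 4) ∉ ({0,3} : Finset (Fin 4)) := by decide
  have h3 : (1:Fin 4) ∉ ({0,2,3} : Finset (Fin 4)) := by decide
  simp [gA, Finset.subset_erase, h1, h2, h3]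

lemma gA_erase2 (U : Finset (Fin 4)) : gA a b c (U.erase 2) = (if {0,3} ⊆ U then b else 0) := by
  have h1 : (2:Fin 4) ∈ ({2,3} : Finset (Fin 4)) := by decide
  have h2 : (2:Fin 4) ∉ ({0,3} : Finset (Fin 4)) := by decide
  have h3 : (2:Fin 4) ∈ ({0,2,3} : Finset (Fin 4)) := by decide
  simp [gA, Finset.subset_erase, h1, h2, h3]

lemma gA_erase3 (U : Finset (Fin 4)) : gA a b c (U.erase 3) = 0 := by
  have h1 : (3:Fin 4) ∈ ({2,3} : Finset (Fin 4)) := by decide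
  have h2 : (3:Fin 4) ∈ ({0,3} : Finset (Fin 4)) := by decide
  have h3 : (3:Fin 4) ∈ ({0,2,3} : Finset (Fin 4)) := by decide
  simp [gA, Finset.subset_erase, h1, h2, h3]

lemma gB_erase0 (U : Finset (Fin 4)) : gB a b c (U.erase 0) = 0 := by
  have h1 : (0:Fin 4) ∈ ({0,2} : Finset (Fin 4)) := by decide
  have h2 : (0:Fin 4) ∈ ({0,3} : Finset (Fin 4)) := by decide
  have h3 : (0:Fin 4) ∈ ({0,2,3} : Finset (Fin 4)) := by decide
  simp [gB, Finset.subset_erase, h1, h2, h3]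

lemma gB_erase1 (U : Finset (Fin 4)) : gB a b c (U.erase 1) = gB a b c U := by
  have h1 : (1:Fin 4) ∉ ({0,2} : Finset (Fin 4)) := by decide
  have h2 : (1:Fin 4) ∉ ({0,3} : Finset (Fin 4)) := by decide
  have h3 : (1:Fin 4) ∉ ({0,2,3} : Finset (Fin 4)) := by decide
  simp [gB, Finset.subset_erase, h1, h2, h3]

lemma gB_erase2 (U : Finset (Fin 4)) : gB a b c (U.erase 2) = (if {0,3} ⊆ U then b else 0) := by
  have h1 : (2:Fin 4) ∈ ({0,2} : Finset (Fin 4)) := by decide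
  have h2 : (2:Fin 4) ∉ ({0,3} : Finset (Fin 4)) := by decide
  have h3 : (2:Fin 4) ∈ ({0,2,3} : Finset (Fin 4)) := by decide
  simp [gB, Finset.subset_erase, h1, h2, h3]

lemma gB_erase3 (U : Finset (Fin 4)) : gB a b c (U.erase 3) = (if {0,2} ⊆ U then a else 0) := by
  have h1 : (3:Fin 4) ∉ ({0,2} : Finset (Fin 4)) := by decide
  have h2 : (3:Fin 4) ∈ ({0,3} : Finset (Fin 4)) := by decide
  have h3 : (3:Fin 4) ∈ ({0,2,3} : Finset (Fin 4)) := by decide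
  simp [gB, Finset.subset_erase, h1, h2, h3]

-- evaluations of gA / gB at the concrete coalitions that occur below
lemma gA_univ : gA a b c Finset.univ = a + b - c := by
  rw [gA, if_pos (by decide), if_pos (by decide), if_pos (by decide)]
lemma gA_03 : gA a b c {0,3} = b := by
  rw [gA, if_neg (by decide), if_pos (by decide), if_neg (by decide)]; ring
lemma gA_2 : gA a b c {2} = 0 := by
  rw [gA, if_neg (by decide), if_neg (by decide), if_neg (by decide)]; ring
lemma gA_3 : gA a b c {3} = 0 := by
  rw [gA, if_neg (by decide), if_neg (by decide), if_neg (by decide)]; ring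
lemma gA_013 : gA a b c {0,1,3} = b := by
  rw [gA, if_neg (by decide), if_pos (by decide), if_neg (by decide)]; ring
lemma gA_012 : gA a b c {0,1,2} = 0 := by
  rw [gA, if_neg (by decide), if_neg (by decide), if_neg (by decide)]; ring
lemma gA_123 : gA a b c {1,2,3} = a := by
  rw [gA, if_pos (by decide), if_neg (by decide), if_neg (by decide)]; ring
lemma gA_13 : gA a b c {1,3} = 0 := by
  rw [gA, if_neg (by decide), if_neg (by decide), if_neg (by decide)]; ring
lemma gA_12 : gA a b c {1,2} = 0 := by
  rw [gA, if_neg (by decide), if_neg (by decide), if_neg (by decide)]; ring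

lemma gB_univ : gB a b c Finset.univ = a + b - c := by
  rw [gB, if_pos (by decide), if_pos (by decide), if_pos (by decide)]
lemma gB_03 : gB a b c {0,3} = b := by
  rw [gB, if_neg (by decide), if_pos (by decide), if_neg (by decide)]; ring
lemma gB_2 : gB a b c {2} = 0 := by
  rw [gB, if_neg (by decide), if_neg (by decide), if_neg (by decide)]; ring
lemma gB_0 : gB a b c {0} = 0 := by
  rw [gB, if_neg (by decide), if_neg (by decide), if_neg (by decide)]; ring
lemma gB_013 : gB a b c {0,1,3} = b := by
  rw [gB, if_neg (by decide), if_pos (by decide), if_neg (by decide)]; ring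
lemma gB_012 : gB a b c {0,1,2} = a := by
  rw [gB, if_pos (by decide), if_neg (by decide), if_neg (by decide)]; ring
lemma gB_123 : gB a b c {1,2,3} = 0 := by
  rw [gB, if_neg (by decide), if_neg (by decide), if_neg (by decide)]; ring
lemma gB_01 : gB a b c {0,1} = 0 := by
  rw [gB, if_neg (by decide), if_neg (by decide), if_neg (by decide)]; ring
lemma gB_12 : gB a b c {1,2} = 0 := by
  rw [gB, if_neg (by decide), if_neg (by decide), if_neg (by decide)]; ring

lemma wconv_A (ω : Fin 4 → ℝ) (hω : ∀ i, 0 < ω i) (p : Fin 4 → ℕ)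
    (hc : 0 ≤ c) (hca : c ≤ a) (hcb : c ≤ b)
    (h03 : p 0 ≤ p 3) (h23 : p 2 ≤ p 3)
    (balA : ω 0 * c ≤ ω 3 * (a - c))
    (balB : p 2 = p 3 → ω 2 * c ≤ ω 3 * (b - c)) :
    WConvex ω p (gA a b c) := by
  intro S T hST
  have hsub : S ⊆ T := hST.subset
  have wnn : ∀ i, 0 ≤ wbar ω p T i := by
    intro i; unfold wbar; split
    · exact (hω i).le
    · exact le_refl 0
  rw [← Finset.univ_inter S, ← Finset.sum_ite_mem, Fin.sum_univ_four]
  simp only [Finset.univ_inter, gA_erase0, gA_erase1, gA_erase2, gA_erase3]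
  have t1 : (if (1:Fin 4) ∈ S then wbar ω p T 1 *
      (gA a b c T - gA a b c T - gA a b c S + gA a b c S) else 0) = 0 := by
    split
    · ring
    · rfl
  rw [t1]
  have m1 : ({2,3} : Finset (Fin 4)) ⊆ S → ({2,3} : Finset (Fin 4)) ⊆ T := fun h => h.trans hsub
  have m2 : ({0,3} : Finset (Fin 4)) ⊆ S → ({0,3} : Finset (Fin 4)) ⊆ T := fun h => h.trans hsub
  by_cases hZT : ({0,2,3} : Finset (Fin 4)) ⊆ T
  · have hAT : ({2,3} : Finset (Fin 4)) ⊆ T :=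
      (show ({2,3} : Finset (Fin 4)) ⊆ {0,2,3} by decide).trans hZT
    have hBT : ({0,3} : Finset (Fin 4)) ⊆ T :=
      (show ({0,3} : Finset (Fin 4)) ⊆ {0,2,3} by decide).trans hZT
    have h3T : (3:Fin 4) ∈ T := hBT (by decide)
    have h0T : (0:Fin 4) ∈ T := hBT (by decide)
    have h2T : (2:Fin 4) ∈ T := hAT (by decide)
    by_cases hZS : ({0,2,3} : Finset (Fin 4)) ⊆ S
    · have hAS : ({2,3} : Finset (Fin 4)) ⊆ S :=
        (show ({2,3} : Finset (Fin 4)) ⊆ {0,2,3} by decide).trans hZS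
      have hBS : ({0,3} : Finset (Fin 4)) ⊆ S :=
        (show ({0,3} : Finset (Fin 4)) ⊆ {0,2,3} by decide).trans hZS
      simp only [gA, if_pos hZT, if_pos hZS, if_pos hAT, if_pos hBT, if_pos hAS, if_pos hBS]
      refine add_nonneg (add_nonneg (add_nonneg ?_ (le_refl 0)) ?_) ?_ <;> split <;> first
        | (apply le_of_eq; ring)
        | rfl
    · by_cases hBS : ({0,3} : Finset (Fin 4)) ⊆ S
      · by_cases hAS : ({2,3} : Finset (Fin 4)) ⊆ S
        · exact absurd (by
            intro x hx
            fin_cases hx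
            exacts [hBS (by decide), hAS (by decide), hAS (by decide)]) hZS
        · -- balance (i): 0,3 ∈ S, 2 ∉ S
          have h0S : (0:Fin 4) ∈ S := hBS (by decide)
          have h3S : (3:Fin 4) ∈ S := hBS (by decide)
          have h2S : (2:Fin 4) ∉ S := fun h => hAS (by
            intro x hx; fin_cases hx
            exacts [h, hBS (by decide)])
          have key : 0 ≤ wbar ω p T 0 * (-c) + wbar ω p T 3 * (a - c) := by
            by_cases hp0 : p 0 = T.sup p
            · have hp3 : p 3 = T.sup p :=
                le_antisymm (Finset.le_sup h3T) (by rw [← hp0]; exact h03)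
              have e0 : wbar ω p T 0 = ω 0 := by simp [wbar, h0T, hp0]
              have e3 : wbar ω p T 3 = ω 3 := by simp [wbar, h3T, hp3]
              rw [e0, e3]
              linarith
            · have hz : wbar ω p T 0 = 0 := by simp [wbar, hp0]
              rw [hz]
              have := mul_nonneg (wnn 3) (by linarith : (0:ℝ) ≤ a - c)
              linarith
          simp only [gA, if_pos hZT, if_pos hAT, if_pos hBT, if_neg hZS, if_neg hAS, if_pos hBS,
            if_pos h0S, if_pos h3S, if_neg h2S]
          ring_nf
          ring_nf at key
          linarith
      · by_cases hAS : ({2,3} : Finset (Fin 4)) ⊆ S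
        · -- balance (ii): 2,3 ∈ S, 0 ∉ S
          have h2S : (2:Fin 4) ∈ S := hAS (by decide)
          have h3S : (3:Fin 4) ∈ S := hAS (by decide)
          have h0S : (0:Fin 4) ∉ S := fun h => hBS (by
            intro x hx; fin_cases hx
            exacts [h, hAS (by decide)])
          have key : 0 ≤ wbar ω p T 2 * (-c) + wbar ω p T 3 * (b - c) := by
            by_cases hp2 : p 2 = T.sup p
            · have hp3 : p 3 = T.sup p :=
                le_antisymm (Finset.le_sup h3T) (by rw [← hp2]; exact h23)
              have hpp : p 2 = p 3 := by rw [hp2, hp3]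
              have e2 : wbar ω p T 2 = ω 2 := by simp [wbar, h2T, hp2]
              have e3 : wbar ω p T 3 = ω 3 := by simp [wbar, h3T, hp3]
              rw [e2, e3]
              have := balB hpp
              linarith
            · have hz : wbar ω p T 2 = 0 := by simp [wbar, hp2]
              rw [hz]
              have := mul_nonneg (wnn 3) (by linarith : (0:ℝ) ≤ b - c)
              linarith
          simp only [gA, if_pos hZT, if_pos hAT, if_pos hBT, if_neg hZS, if_pos hAS, if_neg hBS,
            if_pos h2S, if_pos h3S, if_neg h0S]
          ring_nf
          ring_nf at key
          linarith
        · -- termwise: ¬{0,3}⊆S, ¬{2,3}⊆S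
          simp only [gA, if_pos hZT, if_pos hAT, if_pos hBT, if_neg hZS, if_neg hAS, if_neg hBS]
          refine add_nonneg (add_nonneg (add_nonneg ?_ (le_refl 0)) ?_) ?_ <;> split <;>
            first
            | rfl
            | (apply mul_nonneg (wnn _); linarith)
  · have hZS : ¬ ({0,2,3} : Finset (Fin 4)) ⊆ S := fun h => hZT (h.trans hsub)
    simp only [gA, if_neg hZT, if_neg hZS]
    refine add_nonneg (add_nonneg (add_nonneg ?_ (le_refl 0)) ?_) ?_ <;> split <;>
      first
      | rfl
      | (apply mul_nonneg (wnn _)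
         by_cases hbs : ({0,3} : Finset (Fin 4)) ⊆ S
         · by_cases has : ({2,3} : Finset (Fin 4)) ⊆ S
           · simp [hbs, has, m1 has, m2 hbs] <;> split_ifs <;> linarith
           · simp [hbs, has, m2 hbs] <;> split_ifs <;> linarith
         · by_cases has : ({2,3} : Finset (Fin 4)) ⊆ S
           · simp [hbs, has, m1 has] <;> split_ifs <;> linarith
           · simp [hbs, has] <;> split_ifs <;> linarith)

lemma wconv_B (ω : Fin 4 → ℝ) (hω : ∀ i, 0 < ω i) (p : Fin 4 → ℕ)
    (hc : 0 ≤ c) (hca : c ≤ a) (hcb : c ≤ b)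
    (h30 : p 3 ≤ p 0) (h20 : p 2 ≤ p 0)
    (balA : ω 3 * c ≤ ω 0 * (a - c))
    (balB : p 2 = p 0 → ω 2 * c ≤ ω 0 * (b - c)) :
    WConvex ω p (gB a b c) := by
  intro S T hST
  have hsub : S ⊆ T := hST.subset
  have wnn : ∀ i, 0 ≤ wbar ω p T i := by
    intro i; unfold wbar; split
    · exact (hω i).le
    · exact le_refl 0
  rw [← Finset.univ_inter S, ← Finset.sum_ite_mem, Fin.sum_univ_four]
  simp only [Finset.univ_inter, gB_erase0, gB_erase1, gB_erase2, gB_erase3]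
  have t1 : (if (1:Fin 4) ∈ S then wbar ω p T 1 *
      (gB a b c T - gB a b c T - gB a b c S + gB a b c S) else 0) = 0 := by
    split
    · ring
    · rfl
  rw [t1]
  have m1 : ({0,2} : Finset (Fin 4)) ⊆ S → ({0,2} : Finset (Fin 4)) ⊆ T := fun h => h.trans hsub
  have m2 : ({0,3} : Finset (Fin 4)) ⊆ S → ({0,3} : Finset (Fin 4)) ⊆ T := fun h => h.trans hsub
  by_cases hZT : ({0,2,3} : Finset (Fin 4)) ⊆ T
  · have hAT : ({0,2} : Finset (Fin 4)) ⊆ T :=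
      (show ({0,2} : Finset (Fin 4)) ⊆ {0,2,3} by decide).trans hZT
    have hBT : ({0,3} : Finset (Fin 4)) ⊆ T :=
      (show ({0,3} : Finset (Fin 4)) ⊆ {0,2,3} by decide).trans hZT
    have h3T : (3:Fin 4) ∈ T := hBT (by decide)
    have h0T : (0:Fin 4) ∈ T := hBT (by decide)
    have h2T : (2:Fin 4) ∈ T := hAT (by decide)
    by_cases hZS : ({0,2,3} : Finset (Fin 4)) ⊆ S
    · have hAS : ({0,2} : Finset (Fin 4)) ⊆ S :=
        (show ({0,2} : Finset (Fin 4)) ⊆ {0,2,3} by decide).trans hZS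
      have hBS : ({0,3} : Finset (Fin 4)) ⊆ S :=
        (show ({0,3} : Finset (Fin 4)) ⊆ {0,2,3} by decide).trans hZS
      simp only [gB, if_pos hZT, if_pos hZS, if_pos hAT, if_pos hBT, if_pos hAS, if_pos hBS]
      refine add_nonneg (add_nonneg (add_nonneg ?_ (le_refl 0)) ?_) ?_ <;> split <;> first
        | (apply le_of_eq; ring)
        | rfl
    · by_cases hBS : ({0,3} : Finset (Fin 4)) ⊆ S
      · by_cases hAS : ({0,2} : Finset (Fin 4)) ⊆ S
        · exact absurd (by
            intro x hx
            fin_cases hx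
            exacts [hBS (by decide), hAS (by decide), hBS (by decide)]) hZS
        · -- balance (i): 0,3 ∈ S, 2 ∉ S
          have h0S : (0:Fin 4) ∈ S := hBS (by decide)
          have h3S : (3:Fin 4) ∈ S := hBS (by decide)
          have h2S : (2:Fin 4) ∉ S := fun h => hAS (by
            intro x hx; fin_cases hx
            exacts [hBS (by decide), h])
          have key : 0 ≤ wbar ω p T 3 * (-c) + wbar ω p T 0 * (a - c) := by
            by_cases hp3 : p 3 = T.sup p
            · have hp0 : p 0 = T.sup p :=
                le_antisymm (Finset.le_sup h0T) (by rw [← hp3]; exact h30)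
              have e0 : wbar ω p T 0 = ω 0 := by simp [wbar, h0T, hp0]
              have e3 : wbar ω p T 3 = ω 3 := by simp [wbar, h3T, hp3]
              rw [e0, e3]
              linarith
            · have hz : wbar ω p T 3 = 0 := by simp [wbar, hp3]
              rw [hz]
              have := mul_nonneg (wnn 0) (by linarith : (0:ℝ) ≤ a - c)
              linarith
          simp only [gB, if_pos hZT, if_pos hAT, if_pos hBT, if_neg hZS, if_neg hAS, if_pos hBS,
            if_pos h0S, if_pos h3S, if_neg h2S]
          ring_nf
          ring_nf at key
          linarith
      · by_cases hAS : ({0,2} : Finset (Fin 4)) ⊆ S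
        · -- balance (ii): 0,2 ∈ S, 3 ∉ S
          have h2S : (2:Fin 4) ∈ S := hAS (by decide)
          have h0S : (0:Fin 4) ∈ S := hAS (by decide)
          have h3S : (3:Fin 4) ∉ S := fun h => hBS (by
            intro x hx; fin_cases hx
            exacts [hAS (by decide), h])
          have key : 0 ≤ wbar ω p T 2 * (-c) + wbar ω p T 0 * (b - c) := by
            by_cases hp2 : p 2 = T.sup p
            · have hp0 : p 0 = T.sup p :=
                le_antisymm (Finset.le_sup h0T) (by rw [← hp2]; exact h20)
              have hpp : p 2 = p 0 := by rw [hp2, hp0]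
              have e2 : wbar ω p T 2 = ω 2 := by simp [wbar, h2T, hp2]
              have e0 : wbar ω p T 0 = ω 0 := by simp [wbar, h0T, hp0]
              rw [e2, e0]
              have := balB hpp
              linarith
            · have hz : wbar ω p T 2 = 0 := by simp [wbar, hp2]
              rw [hz]
              have := mul_nonneg (wnn 0) (by linarith : (0:ℝ) ≤ b - c)
              linarith
          simp only [gB, if_pos hZT, if_pos hAT, if_pos hBT, if_neg hZS, if_pos hAS, if_neg hBS,
            if_pos h2S, if_pos h0S, if_neg h3S]
          ring_nf
          ring_nf at key
          linarith
        · -- termwise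
          simp only [gB, if_pos hZT, if_pos hAT, if_pos hBT, if_neg hZS, if_neg hAS, if_neg hBS]
          refine add_nonneg (add_nonneg (add_nonneg ?_ (le_refl 0)) ?_) ?_ <;> split <;>
            first
            | rfl
            | (apply mul_nonneg (wnn _); (try split_ifs) <;> linarith)
  · have hZS : ¬ ({0,2,3} : Finset (Fin 4)) ⊆ S := fun h => hZT (h.trans hsub)
    simp only [gB, if_neg hZT, if_neg hZS]
    refine add_nonneg (add_nonneg (add_nonneg ?_ (le_refl 0)) ?_) ?_ <;> split <;>
      first
      | rfl
      | (apply mul_nonneg (wnn _)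
         by_cases hbs : ({0,3} : Finset (Fin 4)) ⊆ S
         · by_cases has : ({0,2} : Finset (Fin 4)) ⊆ S
           · simp [hbs, has, m1 has, m2 hbs] <;> split_ifs <;> linarith
           · simp [hbs, has, m2 hbs] <;> split_ifs <;> linarith
         · by_cases has : ({0,2} : Finset (Fin 4)) ⊆ S
           · simp [hbs, has, m1 has] <;> split_ifs <;> linarith
           · simp [hbs, has] <;> split_ifs <;> linarith)

-- ===================== violation lemmas =====================

lemma violA (ω : Fin 4 → ℝ) (p : Fin 4 → ℕ)
    (hsup : Finset.univ.sup p = p 1)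
    (hkey : (if p 2 = p 1 then ω 2 * c else 0) + ω 1 * c >
            (if p 3 = p 1 then ω 3 * (b - c) else 0))
    (hW : WConvex ω p (commGame panGraph (gA a b c))) : False := by
  have h := hW {1,2,3} Finset.univ (by decide)
  rw [Finset.sum_insert (by decide), Finset.sum_insert (by decide),
    Finset.sum_singleton] at h
  rw [show Finset.univ.erase (1:Fin 4) = {0,2,3} from by decide,
      show Finset.univ.erase (2:Fin 4) = {0,1,3} from by decide,
      show Finset.univ.erase (3:Fin 4) = {0,1,2} from by decide,
      show ({1,2,3} : Finset (Fin 4)).erase 1 = {2,3} from by decide,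
      show ({1,2,3} : Finset (Fin 4)).erase 2 = {1,3} from by decide,
      show ({1,2,3} : Finset (Fin 4)).erase 3 = {1,2} from by decide] at h
  rw [commGame_univ, commGame_023, commGame_013, commGame_012, commGame_123,
      commGame_23, commGame_13, commGame_12] at h
  rw [gA_univ, gA_03, gA_2, gA_013, gA_012, gA_123, gA_3, gA_13, gA_12] at h
  have w1 : wbar ω p Finset.univ 1 = ω 1 := by simp [wbar, hsup]
  have w2 : wbar ω p Finset.univ 2 = if p 2 = p 1 then ω 2 else 0 := by simp [wbar, hsup]
  have w3 : wbar ω p Finset.univ 3 = if p 3 = p 1 then ω 3 else 0 := by simp [wbar, hsup]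
  rw [w1, w2, w3] at h
  by_cases hp2 : p 2 = p 1 <;> by_cases hp3 : p 3 = p 1 <;>
    simp only [hp2, hp3, if_true, if_false, reduceIte] at h hkey <;>
    ring_nf at h hkey <;> linarith

lemma violB (ω : Fin 4 → ℝ) (p : Fin 4 → ℕ)
    (hsup : Finset.univ.sup p = p 1)
    (hkey : (if p 2 = p 1 then ω 2 * c else 0) + ω 1 * c >
            (if p 0 = p 1 then ω 0 * (b - c) else 0))
    (hW : WConvex ω p (commGame panGraph (gB a b c))) : False := by
  have h := hW {0,1,2} Finset.univ (by decide)
  rw [Finset.sum_insert (by decide), Finset.sum_insert (by decide),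
    Finset.sum_singleton] at h
  rw [show Finset.univ.erase (0:Fin 4) = {1,2,3} from by decide,
      show Finset.univ.erase (1:Fin 4) = {0,2,3} from by decide,
      show Finset.univ.erase (2:Fin 4) = {0,1,3} from by decide,
      show ({0,1,2} : Finset (Fin 4)).erase 0 = {1,2} from by decide,
      show ({0,1,2} : Finset (Fin 4)).erase 1 = {0,2} from by decide,
      show ({0,1,2} : Finset (Fin 4)).erase 2 = {0,1} from by decide] at h
  rw [commGame_univ, commGame_123, commGame_023, commGame_013, commGame_012,
      commGame_12, commGame_02, commGame_01] at h
  rw [gB_univ, gB_123, gB_03, gB_2, gB_013, gB_012, gB_12, gB_0, gB_01] at h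
  have w1 : wbar ω p Finset.univ 1 = ω 1 := by simp [wbar, hsup]
  have w0 : wbar ω p Finset.univ 0 = if p 0 = p 1 then ω 0 else 0 := by simp [wbar, hsup]
  have w2 : wbar ω p Finset.univ 2 = if p 2 = p 1 then ω 2 else 0 := by simp [wbar, hsup]
  rw [w1, w0, w2] at h
  by_cases hp2 : p 2 = p 1 <;> by_cases hp0 : p 0 = p 1 <;>
    simp only [hp2, hp0, if_true, if_false, reduceIte] at h hkey <;>
    ring_nf at h hkey <;> linarith

/-- The `3`-pan does not preserve `(ω,Σ)`-convexity whenever the priorities satisfy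
`p(2) ≥ max(p(1),p(4)) ≥ p(3)` (with players `1,2,3,4` encoded as `0,1,2,3`). -/
theorem pan_not_preserves (ω : Fin 4 → ℝ) (hω : ∀ i, 0 < ω i)
    (p : Fin 4 → ℕ) (hp : ∀ i, 1 ≤ p i)
    (h1 : max (p 0) (p 3) ≤ p 1) (h2 : p 2 ≤ max (p 0) (p 3)) :
    ¬ Preserves panGraph ω p := by
  intro hpre
  have hsup : Finset.univ.sup p = p 1 := by
    apply le_antisymm
    · apply Finset.sup_le
      intro i _
      fin_cases i
      · exact le_trans (le_max_left _ _) h1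
      · exact le_refl _
      · exact le_trans h2 h1
      · exact le_trans (le_max_right _ _) h1
    · exact Finset.le_sup (Finset.mem_univ 1)
  rcases le_or_gt (p 0) (p 3) with h03 | h30
  · have h23 : p 2 ≤ p 3 := by
      have := h2
      rw [max_eq_right h03] at this
      exact this
    rcases eq_or_lt_of_le h23 with heq | hlt
    · -- p 2 = p 3 : use a = ω0+ω3, b = ω2+ω3, c = ω3
      refine violA (a := ω 0 + ω 3) (b := ω 2 + ω 3) (c := ω 3) ω p hsup ?_
        (hpre _ gA_empty (wconv_A ω hω p (hω 3).le (by linarith [hω 0]) (by linarith [hω 2])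
          h03 h23 (le_of_eq (by ring)) (fun _ => le_of_eq (by ring))))
      by_cases hp3 : p 3 = p 1
      · have hp2 : p 2 = p 1 := heq.trans hp3
        rw [if_pos hp2, if_pos hp3]
        have h13 := mul_pos (hω 1) (hω 3)
        nlinarith [mul_pos (hω 2) (hω 3)]
      · rw [if_neg hp3]
        have h13 := mul_pos (hω 1) (hω 3)
        split_ifs with hp2
        · nlinarith [mul_pos (hω 2) (hω 3)]
        · nlinarith
    · -- p 2 < p 3 : use a = ω0+ω3, b = ω3, c = ω3
      refine violA (a := ω 0 + ω 3) (b := ω 3) (c := ω 3) ω p hsup ?_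
        (hpre _ gA_empty (wconv_A ω hω p (hω 3).le (by linarith [hω 0]) le_rfl
          h03 h23 (le_of_eq (by ring)) (fun h => absurd h (by omega))))
      have hz : (if p 3 = p 1 then ω 3 * (ω 3 - ω 3) else 0) = 0 := by split <;> ring
      rw [hz]
      have h13 := mul_pos (hω 1) (hω 3)
      split_ifs with hp2
      · nlinarith [mul_pos (hω 2) (hω 3)]
      · nlinarith
  · have h20 : p 2 ≤ p 0 := by
      have := h2
      rw [max_eq_left h30.le] at this
      exact this
    rcases eq_or_lt_of_le h20 with heq | hlt
    · -- p 2 = p 0 : use a = ω0+ω3, b = ω0+ω2, c = ω0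
      refine violB (a := ω 0 + ω 3) (b := ω 0 + ω 2) (c := ω 0) ω p hsup ?_
        (hpre _ gB_empty (wconv_B ω hω p (hω 0).le (by linarith [hω 3]) (by linarith [hω 2])
          h30.le h20 (le_of_eq (by ring)) (fun _ => le_of_eq (by ring))))
      by_cases hp0 : p 0 = p 1
      · have hp2 : p 2 = p 1 := heq.trans hp0
        rw [if_pos hp2, if_pos hp0]
        have h10 := mul_pos (hω 1) (hω 0)
        nlinarith [mul_pos (hω 2) (hω 0)]
      · rw [if_neg hp0]
        have h10 := mul_pos (hω 1) (hω 0)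
        split_ifs with hp2
        · nlinarith [mul_pos (hω 2) (hω 0)]
        · nlinarith
    · -- p 2 < p 0 : use a = ω0+ω3, b = ω0, c = ω0
      refine violB (a := ω 0 + ω 3) (b := ω 0) (c := ω 0) ω p hsup ?_
        (hpre _ gB_empty (wconv_B ω hω p (hω 0).le (by linarith [hω 3]) le_rfl
          h30.le h20 (le_of_eq (by ring)) (fun h => absurd h (by omega))))
      have hz : (if p 0 = p 1 then ω 0 * (ω 0 - ω 0) else 0) = 0 := by split <;> ring
      rw [hz]
      have h10 := mul_pos (hω 1) (hω 0)
      split_ifs with hp2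
      · nlinarith [mul_pos (hω 2) (hω 0)]
      · nlinarith

end
end
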